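/- arXiv:2510.20435 — 7 statements merged into one kernel-verified Lean document; each statement's English description precedes it below -/
import Mathlib

section
/- For a nonzero algebraic integer α, the house of α (the maximum absolute value of its complex conjugates) is at least 1, and it equals 1 if and only if α is a root of unity. -/
/-!
Kronecker's theorem says that a nonzero algebraic integer whose conjugates all lie in the closed
unit disk is a root of unity. Since `α` is one of its own conjugates, a house `≤ 1` therefore
makes `α` a root of unity, so `|α| = 1` and the house is exactly `1`; this gives both `1 ≤ h` and
one direction of the equivalence. Conversely, if `αⁿ = 1` then the minimal polynomial of `α`
divides `Xⁿ - 1`, so every conjugate is a root of unity and has modulus `1`.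
-/

def IsRootOfUnity (z : ℂ) : Prop := ∃ n : ℕ, 0 < n ∧ z ^ n = 1

open Polynomial IntermediateField

theorem pow_eq_one_of_aeval_minpoly_eq_zero {F K : Type*} [Field F] [Ring K] [Algebra F K]
    {x y : K} {n : ℕ} (hx : x ^ n = 1) (hy : aeval y (minpoly F x) = 0) : y ^ n = 1 := by
  have hdvd : minpoly F x ∣ X ^ n - 1 := minpoly.dvd F x (by simp [hx])
  simpa [sub_eq_zero] using aeval_eq_zero_of_dvd_aeval_eq_zero hdvd hy

namespace IsRootOfUnity

theorem norm_eq_one {z : ℂ} (hz : IsRootOfUnity z) : ‖z‖ = 1 :=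
  let ⟨_, hn, hzn⟩ := hz
  Complex.norm_eq_one_of_pow_eq_one hzn hn.ne'

theorem of_aeval_minpoly_eq_zero {α β : ℂ} (hα : IsRootOfUnity α)
    (hβ : aeval β (minpoly ℚ α) = 0) : IsRootOfUnity β :=
  let ⟨n, hn, hαn⟩ := hα
  ⟨n, hn, pow_eq_one_of_aeval_minpoly_eq_zero hαn hβ⟩

/-- Kronecker's theorem, transported from the number field `ℚ⟮α⟯` to `ℂ`. -/
theorem of_norm_conjugates_le_one {α : ℂ} (hα : IsIntegral ℤ α) (hα0 : α ≠ 0)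
    (hconj : ∀ β : ℂ, aeval β (minpoly ℚ α) = 0 → ‖β‖ ≤ 1) : IsRootOfUnity α := by
  have : FiniteDimensional ℚ ℚ⟮α⟯ := adjoin.finiteDimensional hα.tower_top
  have : NumberField ℚ⟮α⟯ := ⟨⟩
  obtain ⟨x, hxα, hmin⟩ : ∃ x : ℚ⟮α⟯, algebraMap ℚ⟮α⟯ ℂ x = α ∧ minpoly ℚ x = minpoly ℚ α :=
    ⟨_, AdjoinSimple.algebraMap_gen ℚ α, minpoly_gen ℚ α⟩
  have hx : IsIntegral ℤ x := by
    rwa [← isIntegral_algebraMap_iff (algebraMap ℚ⟮α⟯ ℂ).injective, hxα]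
  have hx0 : x ≠ 0 := fun h0 => hα0 (by rw [← hxα, h0, map_zero])
  have hφx (φ : ℚ⟮α⟯ →+* ℂ) : aeval (φ x) (minpoly ℚ α) = 0 := by
    rw [← hmin, ← φ.toRatAlgHom_apply, aeval_algHom_apply, minpoly.aeval, map_zero]
  obtain ⟨n, hn, hxn⟩ := NumberField.Embeddings.pow_eq_one_of_norm_le_one ℚ⟮α⟯ ℂ hx0 hx
    fun φ => hconj (φ x) (hφx φ)
  exact ⟨n, hn, by rw [← hxα, ← map_pow, hxn, map_one]⟩

end IsRootOfUnity

/-- For a nonzero algebraic integer `α`, the house of `α` (the maximum of `|β|` over the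
complex conjugates `β` of `α`, i.e. the roots of its minimal polynomial over `ℚ`) is at
least `1`, with equality if and only if `α` is a root of unity. -/
theorem house_ge_one_and_eq_one_iff_rootOfUnity
    (α : ℂ) (hα : IsIntegral ℤ α) (hα0 : α ≠ 0) (h : ℝ)
    (hh : IsGreatest {x : ℝ | ∃ β : ℂ,
      Polynomial.aeval β (minpoly ℚ α) = 0 ∧ x = ‖β‖} h) :
    1 ≤ h ∧ (h = 1 ↔ IsRootOfUnity α) := by
  have hroot_of_le_one : h ≤ 1 → IsRootOfUnity α := fun h1 =>
    .of_norm_conjugates_le_one hα hα0 fun β hβ => (hh.2 ⟨β, hβ, rfl⟩).trans h1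
  have one_le : 1 ≤ h := by
    by_contra! hlt
    have hαh : ‖α‖ ≤ h := hh.2 ⟨α, minpoly.aeval ℚ α, rfl⟩
    linarith [(hroot_of_le_one hlt.le).norm_eq_one]
  refine ⟨one_le, fun h1 => hroot_of_le_one h1.le, fun hroot => ?_⟩
  obtain ⟨β, hβ, rfl⟩ := hh.1
  exact (hroot.of_aeval_minpoly_eq_zero hβ).norm_eq_one
end

section
/- Let α ∈ ℚ(ζ_N) be a cyclotomic algebraic number, and let N₀ be the minimal level of α, i.e., the smallest positive integer M such that some root of unity times some Galois conjugate of α lies in ℚ(ζ_M). Then N₀ divides N. -/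
/-- The `M`-th cyclotomic field inside `ℂ`, generated by `e^{2πi/M}`. -/
noncomputable def cycloField (M : ℕ) : IntermediateField ℚ ℂ :=
  IntermediateField.adjoin ℚ {Complex.exp (2 * Real.pi * Complex.I / M)}

/-- `b` is equivalent to `a`: `b` equals a root of unity times a Galois conjugate of `a`
(an element with the same minimal polynomial over `ℚ`). -/
def CycEquiv (a b : ℂ) : Prop :=
  ∃ u c : ℂ, IsRootOfUnity u ∧ minpoly ℚ c = minpoly ℚ a ∧ b = u * c

/-! If `u * c ∈ ℚ(ζ_{N₀})` with `u` a root of unity and `c` a conjugate of `α` (so `c ∈ ℚ(ζ_N)`,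
which is normal), suppose `N₀` has larger `p`-adic valuation than `N`. Split `u = v * w` with
`v` of order `p ^ j` and `w` of order `m` prime to `p`. Then `w * c` lies in both
`ℚ(ζ_{lcm(p ^ j, N₀)})` and `ℚ(ζ_{lcm(m, N)})`. Since `φ(gcd a b) * φ(lcm a b) = φ a * φ b`,
the fields `ℚ(ζ_a)` and `ℚ(ζ_b)` are linearly disjoint over `ℚ(ζ_{gcd a b})`, so `w * c ∈ ℚ(ζ_D)`
for the gcd `D` of the two levels. But `D` is a proper divisor of `N₀`, contradicting minimality.
-/

open IntermediateField Polynomial Module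

theorem IsPrimitiveRoot.mem_of_pow_eq_one {R S : Type*} [CommRing R] [IsDomain R] [SetLike S R]
    [SubmonoidClass S R] {K : S} {ζ : R} {n : ℕ} [NeZero n] (hζ : IsPrimitiveRoot ζ n)
    (hζK : ζ ∈ K) {z : R} (hz : z ^ n = 1) : z ∈ K := by
  obtain ⟨i, -, rfl⟩ := hζ.eq_pow_of_pow_eq_one hz
  exact pow_mem hζK i

theorem exists_mul_eq_of_pow_mul_eq_one {G : Type*} [CommGroupWithZero G] {u : G} (hu0 : u ≠ 0)
    {a b : ℕ} (hab : a.Coprime b) (hu : u ^ (a * b) = 1) :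
    ∃ v w : G, v ^ a = 1 ∧ w ^ b = 1 ∧ u = v * w := by
  obtain ⟨x, y, hxy⟩ := Nat.isCoprime_iff_coprime.2 hab
  have hpow (k : ℤ) (m : ℕ) (hm : (a * b : ℤ) ∣ k * m) : (u ^ k) ^ m = 1 := by
    obtain ⟨t, ht⟩ := hm
    rw [← zpow_natCast, ← zpow_mul, ht, zpow_mul, ← Nat.cast_mul, zpow_natCast, hu, one_zpow]
  refine ⟨u ^ (b * y), u ^ (a * x), hpow _ _ ⟨y, by ring⟩, hpow _ _ ⟨x, by ring⟩, ?_⟩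
  rw [← zpow_add₀ hu0]
  convert (zpow_one u).symm using 2
  linear_combination hxy

theorem Nat.totient_gcd_mul_totient_lcm (a b : ℕ) :
    (a.gcd b).totient * (a.lcm b).totient = a.totient * b.totient := by
  rcases eq_or_ne (a.gcd b) 0 with h0 | h0
  · simp [Nat.gcd_eq_zero_iff.1 h0]
  have h := totient_gcd_mul_totient_mul (a.gcd b) (a.lcm b)
  rw [Nat.gcd_eq_left (Nat.gcd_dvd_left a b |>.trans (Nat.dvd_lcm_left a b)), Nat.gcd_mul_lcm]
    at h
  exact Nat.eq_of_mul_eq_mul_right (Nat.pos_of_ne_zero h0)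
    (h.symm.trans (totient_gcd_mul_totient_mul a b))

theorem Nat.gcd_lcm_pow_dvd_and_factorization_le {p j b M N : ℕ} (hp : p.Prime) (hb : b ≠ 0)
    (hpb : ¬ p ∣ b) (hM : M ≠ 0) (hN : N ≠ 0) (hle : N.factorization p ≤ M.factorization p) :
    ((p ^ j).lcm M).gcd (b.lcm N) ∣ M ∧
      (((p ^ j).lcm M).gcd (b.lcm N)).factorization p ≤ N.factorization p := by
  have hpM : (p ^ j).lcm M ≠ 0 := Nat.lcm_ne_zero (pow_ne_zero j hp.ne_zero) hM
  have hbN : b.lcm N ≠ 0 := Nat.lcm_ne_zero hb hN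
  have hp' : (((p ^ j).lcm M).gcd (b.lcm N)).factorization p ≤ N.factorization p := by
    rw [factorization_gcd hpM hbN, Finsupp.inf_apply, factorization_lcm hb hN, Finsupp.sup_apply,
      factorization_eq_zero_of_not_dvd hpb]
    simp
  refine ⟨(factorization_prime_le_iff_dvd (Nat.gcd_ne_zero_left hpM) hM).1 fun q _ => ?_, hp'⟩
  rcases eq_or_ne q p with rfl | hqp
  · exact hp'.trans hle
  · rw [factorization_gcd hpM hbN, Finsupp.inf_apply,
      factorization_lcm (pow_ne_zero j hp.ne_zero) hM, Finsupp.sup_apply, hp.factorization_pow]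
    simp [hqp.symm]

theorem IntermediateField.mem_of_minpoly_eq {F L : Type*} [Field F] [Field L] [Algebra F L]
    {K : IntermediateField F L} (hK : Normal F K) {x y : L} (hx : x ∈ K)
    (h : minpoly F y = minpoly F x) : y ∈ K := by
  have hsplit := hK.splits ⟨x, hx⟩
  rw [minpoly_eq] at hsplit
  have hroot : (((minpoly F x).map (algebraMap F K)).map (algebraMap K L)).IsRoot y := by
    rw [Polynomial.map_map, ← IsScalarTower.algebraMap_eq, IsRoot, eval_map_algebraMap, ← h,
      minpoly.aeval]
  obtain ⟨z, rfl⟩ := hsplit.mem_range_of_isRoot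
    (map_ne_zero (minpoly.ne_zero (isIntegral_iff.1 (hK.isIntegral ⟨x, hx⟩)))) hroot
  exact z.2

theorem IntermediateField.inf_le_of_finrank_mul_finrank_sup {K L : Type*} [Field K] [Field L]
    [Algebra K L] {F A B : IntermediateField K L} (hA : F ≤ A) (hB : F ≤ B)
    [FiniteDimensional K A] [FiniteDimensional K B]
    (h : finrank K F * finrank K ↥(A ⊔ B) = finrank K A * finrank K B) : A ⊓ B ≤ F := by
  have : FiniteDimensional K (extendScalars hA) := ‹FiniteDimensional K A›
  have : FiniteDimensional K (extendScalars hB) := ‹FiniteDimensional K B›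
  have : FiniteDimensional K F := FiniteDimensional.left K F (extendScalars hA)
  have : FiniteDimensional F (extendScalars hA) := FiniteDimensional.right K F _
  have : FiniteDimensional F (extendScalars hB) := FiniteDimensional.right K F _
  have : Module.Free F (extendScalars hA) := .of_divisionRing _ _
  have : Module.Free F (extendScalars hB) := .of_divisionRing _ _
  have tA : finrank K F * finrank F (extendScalars hA) = finrank K A :=
    finrank_mul_finrank K F (extendScalars hA)
  have tB : finrank K F * finrank F (extendScalars hB) = finrank K B :=
    finrank_mul_finrank K F (extendScalars hB)
  have tAB : finrank K F * finrank F (extendScalars (hA.trans le_sup_left : F ≤ A ⊔ B)) =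
      finrank K ↥(A ⊔ B) :=
    finrank_mul_finrank K F (extendScalars (hA.trans le_sup_left : F ≤ A ⊔ B))
  have hF : 0 < finrank K F := finrank_pos
  have hdisj : (extendScalars hA).LinearDisjoint (extendScalars hB) := by
    refine .of_finrank_sup (Nat.eq_of_mul_eq_mul_left (Nat.mul_pos hF hF) ?_)
    rw [extendScalars_sup]
    calc _ = finrank K F * finrank K ↥(A ⊔ B) := by rw [← tAB]; ring
      _ = _ := by rw [h, ← tA, ← tB]; ring
  intro x hx
  have hx' : x ∈ extendScalars hA ⊓ extendScalars hB := ⟨hx.1, hx.2⟩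
  rw [hdisj.inf_eq_bot, mem_bot] at hx'
  obtain ⟨y, rfl⟩ := hx'
  exact y.2

theorem mem_cycloField_of_pow_eq_one {M : ℕ} (hM : M ≠ 0) {z : ℂ} (hz : z ^ M = 1) :
    z ∈ cycloField M :=
  have : NeZero M := ⟨hM⟩
  (Complex.isPrimitiveRoot_exp M hM).mem_of_pow_eq_one (mem_adjoin_simple_self ℚ _) hz

theorem cycloField_mono {a b : ℕ} (hb : b ≠ 0) (hab : a ∣ b) : cycloField a ≤ cycloField b :=
  adjoin_simple_le_iff.2 <| mem_cycloField_of_pow_eq_one hb <|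
    ((Complex.isPrimitiveRoot_exp a (ne_zero_of_dvd_ne_zero hb hab)).pow_eq_one_iff_dvd b).2 hab

theorem cycloField_sup {a b : ℕ} (ha : a ≠ 0) (hb : b ≠ 0) :
    cycloField a ⊔ cycloField b = cycloField (a.lcm b) := by
  have hl : a.lcm b ≠ 0 := Nat.lcm_ne_zero ha hb
  refine le_antisymm (sup_le (cycloField_mono hl (Nat.dvd_lcm_left a b))
    (cycloField_mono hl (Nat.dvd_lcm_right a b))) (adjoin_simple_le_iff.2 ?_)
  have : NeZero (a.lcm b) := ⟨hl⟩
  refine ((Complex.isPrimitiveRoot_exp a ha).pow_mul_pow_lcm (Complex.isPrimitiveRoot_exp b hb)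
    ha hb).mem_of_pow_eq_one (mul_mem (pow_mem ?_ _) (pow_mem ?_ _))
    (Complex.isPrimitiveRoot_exp _ hl).pow_eq_one
  · exact le_sup_left (b := cycloField b) (mem_adjoin_simple_self ℚ _)
  · exact le_sup_right (a := cycloField a) (mem_adjoin_simple_self ℚ _)

theorem isCyclotomicExtension_cycloField {M : ℕ} (hM : M ≠ 0) :
    IsCyclotomicExtension {M} ℚ (cycloField M) := by
  have : NeZero M := ⟨hM⟩
  have hζ := Complex.isPrimitiveRoot_exp M hM
  have h : (cycloField M).toSubalgebra =
      Algebra.adjoin ℚ {Complex.exp (2 * Real.pi * Complex.I / M)} :=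
    adjoin_simple_toSubalgebra_of_isAlgebraic
      (hζ.isIntegral (Nat.pos_of_ne_zero hM)).tower_top.isAlgebraic
  have := hζ.adjoin_isCyclotomicExtension ℚ
  exact IsCyclotomicExtension.equiv {M} ℚ _ (Subalgebra.equivOfEq _ _ h.symm)

theorem finrank_cycloField {M : ℕ} (hM : M ≠ 0) : finrank ℚ (cycloField M) = M.totient :=
  have : NeZero M := ⟨hM⟩
  have := isCyclotomicExtension_cycloField hM
  IsCyclotomicExtension.Rat.finrank M (cycloField M)

theorem finiteDimensional_cycloField {M : ℕ} (hM : M ≠ 0) : FiniteDimensional ℚ (cycloField M) :=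
  .of_finrank_pos (by rw [finrank_cycloField hM]; exact Nat.totient_pos.2 (Nat.pos_of_ne_zero hM))

theorem normal_cycloField {M : ℕ} (hM : M ≠ 0) : Normal ℚ (cycloField M) :=
  have := isCyclotomicExtension_cycloField hM
  (IsCyclotomicExtension.isGalois {M} ℚ (cycloField M)).to_normal

theorem cycloField_inf_le {a b : ℕ} (ha : a ≠ 0) (hb : b ≠ 0) :
    cycloField a ⊓ cycloField b ≤ cycloField (a.gcd b) := by
  have hd : a.gcd b ≠ 0 := Nat.gcd_ne_zero_left ha
  have := finiteDimensional_cycloField ha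
  have := finiteDimensional_cycloField hb
  refine inf_le_of_finrank_mul_finrank_sup (cycloField_mono ha (Nat.gcd_dvd_left a b))
    (cycloField_mono hb (Nat.gcd_dvd_right a b)) ?_
  rw [cycloField_sup ha hb, finrank_cycloField hd, finrank_cycloField (Nat.lcm_ne_zero ha hb),
    finrank_cycloField ha, finrank_cycloField hb, Nat.totient_gcd_mul_totient_lcm]

theorem exists_pow_eq_one_mul_mem_cycloField_gcd {M N a b : ℕ} (hM : M ≠ 0) (hN : N ≠ 0)
    (ha : a ≠ 0) (hb : b ≠ 0) (hab : a.Coprime b) {u c : ℂ} (hu : u ^ (a * b) = 1)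
    (hc : c ∈ cycloField N) (huc : u * c ∈ cycloField M) :
    ∃ w : ℂ, w ^ b = 1 ∧ w * c ∈ cycloField ((a.lcm M).gcd (b.lcm N)) := by
  have hu0 : u ≠ 0 := ne_zero_pow (Nat.mul_ne_zero ha hb) (hu ▸ one_ne_zero)
  obtain ⟨v, w, hv, hw, rfl⟩ := exists_mul_eq_of_pow_mul_eq_one hu0 hab hu
  have haM : a.lcm M ≠ 0 := Nat.lcm_ne_zero ha hM
  have hbN : b.lcm N ≠ 0 := Nat.lcm_ne_zero hb hN
  refine ⟨w, hw, cycloField_inf_le haM hbN ⟨?_, ?_⟩⟩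
  · have hv : v ∈ cycloField (a.lcm M) :=
      cycloField_mono haM (Nat.dvd_lcm_left a M) (mem_cycloField_of_pow_eq_one ha hv)
    rw [← inv_mul_cancel_left₀ (left_ne_zero_of_mul hu0) (w * c), ← mul_assoc v]
    exact mul_mem (inv_mem hv) (cycloField_mono haM (Nat.dvd_lcm_right a M) huc)
  · exact mul_mem (cycloField_mono hbN (Nat.dvd_lcm_left b N) (mem_cycloField_of_pow_eq_one hb hw))
      (cycloField_mono hbN (Nat.dvd_lcm_right b N) hc)

theorem minimalLevel_dvd_general (N : ℕ) (α : ℂ) (hα : α ∈ cycloField N)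
    (N₀ : ℕ)
    (hmin : IsLeast {M : ℕ | 0 < M ∧ ∃ β : ℂ, β ∈ cycloField M ∧ CycEquiv α β} N₀) :
    N₀ ∣ N := by
  rcases eq_or_ne N 0 with rfl | hN
  · exact dvd_zero N₀
  obtain ⟨⟨hN₀, _, hβ, u, c, ⟨n, hn, hu⟩, hc, rfl⟩, hleast⟩ := hmin
  have hcN : c ∈ cycloField N := mem_of_minpoly_eq (normal_cycloField hN) hα hc
  refine (Nat.factorization_prime_le_iff_dvd hN₀.ne' hN).1 fun p hp => ?_
  by_contra! hlt
  have hcop : (ordProj[p] n).Coprime (ordCompl[p] n) :=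
    (Nat.coprime_ordCompl hp hn.ne').pow_left _
  obtain ⟨w, hw, hwc⟩ := exists_pow_eq_one_mul_mem_cycloField_gcd hN₀.ne' hN
    (pow_ne_zero _ hp.ne_zero) (Nat.ordCompl_pos p hn.ne').ne' hcop
    (by rwa [Nat.ordProj_mul_ordCompl_eq_self]) hcN hβ
  obtain ⟨hD, hDp⟩ := Nat.gcd_lcm_pow_dvd_and_factorization_le hp
    (Nat.ordCompl_pos p hn.ne').ne' (Nat.not_dvd_ordCompl hp hn.ne') hN₀.ne' hN hlt.le
  have hDpos := Nat.pos_of_dvd_of_pos hD hN₀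
  have hN₀D := hleast ⟨hDpos, _, hwc, w, c, ⟨_, Nat.ordCompl_pos p hn.ne', hw⟩, hc, rfl⟩
  rw [Nat.le_antisymm (Nat.le_of_dvd hN₀ hD) hN₀D] at hDp
  omega

/-- If `α ∈ ℚ(ζ_N)` and `N₀` is the minimal level of `α` (the least positive `M` such that
`α` is equivalent to an element of `ℚ(ζ_M)`), then `N₀` divides `N`. -/
theorem minimalLevel_dvd (N : ℕ) (hN : 0 < N) (α : ℂ) (hα : α ∈ cycloField N)
    (N₀ : ℕ)
    (hmin : IsLeast {M : ℕ | 0 < M ∧ ∃ β : ℂ, β ∈ cycloField M ∧ CycEquiv α β} N₀) :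
    N₀ ∣ N :=
  minimalLevel_dvd_general N α hα N₀ hmin
end

section
/- Let ζ be a root of unity such that ζ + ζ^{-1} ∈ ℚ(ζ_N) for some positive integer N. Then either ζ ∈ ℚ(ζ_N) or ζ ∈ {ζ_3, ζ_4, ζ_6} (i.e., ζ is a primitive 3rd, 4th, or 6th root of unity). -/
/-!
Let `m` be the order of `ζ`, let `K = ℚ(ζ_N)` and suppose `ζ ∉ K`. Then `ζ` is quadratic over `K`
with conjugate `ζ⁻¹`, and the conjugation fixes the root of unity `ζ ^ (m / d) ∈ K`,
`d = gcd(N, m)`; hence `d ∣ 2`. So every `c` prime to `m` lifts, by the Chinese remainder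
theorem, to some `b` with `b ≡ 1 [MOD N]` and `b ≡ c [MOD m]`. The embedding of `ℚ(ζ_M)`,
`M = lcm(N, m)`, sending `ζ_M` to `ζ_M ^ b` is the identity on `K`, so it fixes `ζ + ζ⁻¹`,
which forces `ζ ^ c ∈ {ζ, ζ⁻¹}`. Thus `φ(m) ≤ 2`, i.e. `m ∈ {1, 2, 3, 4, 6}`, and `m ≤ 2`
would give `ζ = ±1 ∈ K`.
-/

-- `x` and `y` are the roots of `X ^ 2 - (x + y) * X + x * y ∈ K[X]`, and `a + b * X` is the
-- remainder of `X ^ k` modulo this polynomial.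
theorem Subfield.exists_pow_eq_add_mul_of_add_mem_of_mul_mem {F : Type*} [Field F]
    (K : Subfield F) {x y : F} (hsum : x + y ∈ K) (hprod : x * y ∈ K) (k : ℕ) :
    ∃ a ∈ K, ∃ b ∈ K, x ^ k = a + b * x ∧ y ^ k = a + b * y := by
  induction k with
  | zero => exact ⟨1, K.one_mem, 0, K.zero_mem, by simp, by simp⟩
  | succ k ih =>
    obtain ⟨a, ha, b, hb, hx, hy⟩ := ih
    refine ⟨-(b * (x * y)), K.neg_mem (K.mul_mem hb hprod),
      a + b * (x + y), K.add_mem ha (K.mul_mem hb hsum), ?_, ?_⟩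
    · rw [pow_succ, hx]; ring
    · rw [pow_succ, hy]; ring

theorem Subfield.pow_eq_pow_of_pow_mem {F : Type*} [Field F] (K : Subfield F) {x y : F}
    (hsum : x + y ∈ K) (hprod : x * y ∈ K) (hx : x ∉ K) {k : ℕ} (hk : x ^ k ∈ K) :
    y ^ k = x ^ k := by
  obtain ⟨a, ha, b, hb, hxk, hyk⟩ := K.exists_pow_eq_add_mul_of_add_mem_of_mul_mem hsum hprod k
  obtain rfl : b = 0 := by
    by_contra hb0
    refine hx ?_
    have : x = (x ^ k - a) / b := by field_simp; rw [hxk]; ring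
    rw [this]
    exact K.div_mem (K.sub_mem hk ha) hb
  rw [hxk, hyk]; ring

theorem eq_or_eq_inv_of_add_inv_eq_add_inv {F : Type*} [Field F] {x y : F} (hx : x ≠ 0)
    (hy : y ≠ 0) (h : x + x⁻¹ = y + y⁻¹) : x = y ∨ x = y⁻¹ := by
  have : (x - y) * (x * y - 1) = 0 := by
    field_simp at h
    linear_combination h
  rcases mul_eq_zero.mp this with h' | h'
  · exact Or.inl (sub_eq_zero.mp h')
  · exact Or.inr (eq_inv_of_mul_eq_one_left (sub_eq_zero.mp h'))

theorem Nat.one_modEq_of_dvd_two {d c : ℕ} (hd : d ∣ 2) (hc : c.Coprime d) : 1 ≡ c [MOD d] := by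
  rcases (Nat.dvd_prime Nat.prime_two).mp hd with rfl | rfl
  · exact Nat.modEq_one
  · exact (Nat.odd_iff.mp (Nat.coprime_two_right.mp hc)).symm

theorem mem_cycloField_of_pow_eq_one_s5 {N : ℕ} (hN : N ≠ 0) {ω : ℂ} (hω : ω ^ N = 1) :
    ω ∈ cycloField N := by
  have : NeZero N := ⟨hN⟩
  obtain ⟨i, -, rfl⟩ := (Complex.isPrimitiveRoot_exp N hN).eq_pow_of_pow_eq_one hω
  exact pow_mem (IntermediateField.mem_adjoin_simple_self ℚ _) i

theorem gcd_dvd_two_of_add_inv_mem_cycloField {N m : ℕ} (hN : N ≠ 0) (hm : 0 < m) {ζ : ℂ}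
    (hζ : IsPrimitiveRoot ζ m) (h : ζ + ζ⁻¹ ∈ cycloField N) (hnot : ζ ∉ cycloField N) :
    N.gcd m ∣ 2 := by
  have hω : IsPrimitiveRoot (ζ ^ (m / N.gcd m)) (N.gcd m) :=
    hζ.pow hm (Nat.div_mul_cancel (Nat.gcd_dvd_right N m)).symm
  have hωK : ζ ^ (m / N.gcd m) ∈ cycloField N :=
    mem_cycloField_of_pow_eq_one_s5 hN ((hω.pow_eq_one_iff_dvd N).mpr (Nat.gcd_dvd_left N m))
  have hinv : ζ⁻¹ ^ (m / N.gcd m) = ζ ^ (m / N.gcd m) :=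
    (cycloField N).toSubfield.pow_eq_pow_of_pow_mem h
      (by simp [mul_inv_cancel₀ (hζ.ne_zero hm.ne')]) hnot hωK
  refine (hω.pow_eq_one_iff_dvd 2).mp ?_
  rw [sq]
  nth_rewrite 1 [← hinv]
  rw [inv_pow, inv_mul_cancel₀ (pow_ne_zero _ (hζ.ne_zero hm.ne'))]

theorem cycloField_mono_s5 {N M : ℕ} (hM : M ≠ 0) (hNM : N ∣ M) : cycloField N ≤ cycloField M :=
  IntermediateField.adjoin_simple_le_iff.mpr <| mem_cycloField_of_pow_eq_one_s5 hM <|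
    ((Complex.isPrimitiveRoot_exp N (ne_zero_of_dvd_ne_zero hM hNM)).pow_eq_one_iff_dvd M).mpr hNM

open IntermediateField Polynomial in
theorem exists_ringHom_cycloField_apply_eq_pow {M b : ℕ} (hM : M ≠ 0) (hb : b.Coprime M) :
    ∃ σ : cycloField M →+* ℂ, ∀ x : cycloField M, (x : ℂ) ^ M = 1 → σ x = (x : ℂ) ^ b := by
  have hμ := Complex.isPrimitiveRoot_exp M hM
  have hμint := (hμ.isIntegral (Nat.pos_of_ne_zero hM)).tower_top (A := ℚ)
  have hroot : (minpoly ℚ (Complex.exp (2 * Real.pi * Complex.I / M))).aeval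
      (Complex.exp (2 * Real.pi * Complex.I / M) ^ b) = 0 := by
    rw [← cyclotomic_eq_minpoly_rat hμ (Nat.pos_of_ne_zero hM),
      cyclotomic_eq_minpoly_rat (hμ.pow_of_coprime b hb) (Nat.pos_of_ne_zero hM)]
    exact minpoly.aeval ℚ _
  let σ := (algHomAdjoinIntegralEquiv ℚ hμint).symm
    ⟨_, mem_aroots.mpr ⟨minpoly.ne_zero hμint, hroot⟩⟩
  refine ⟨σ.toRingHom, fun x hx => ?_⟩
  have : NeZero M := ⟨hM⟩
  obtain ⟨j, -, hj⟩ := hμ.eq_pow_of_pow_eq_one hx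
  obtain rfl : x = AdjoinSimple.gen ℚ _ ^ j := Subtype.ext hj.symm
  change σ (AdjoinSimple.gen ℚ _ ^ j) = _
  rw [map_pow, algHomAdjoinIntegralEquiv_symm_apply_gen, ← hj]
  ring

theorem ringHom_apply_eq_self_of_mem_cycloField {N M b : ℕ} (hM : M ≠ 0) (hNM : N ∣ M)
    (hb : b ≡ 1 [MOD N]) {σ : cycloField M →+* ℂ}
    (hσ : ∀ x : cycloField M, (x : ℂ) ^ M = 1 → σ x = (x : ℂ) ^ b)
    (x : cycloField M) (hx : (x : ℂ) ∈ cycloField N) : σ x = x := by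
  have hN : N ≠ 0 := ne_zero_of_dvd_ne_zero hM hNM
  have hη := Complex.isPrimitiveRoot_exp N hN
  -- `inclusion` and `val` use `IntermediateField.algebra'`, which is not reducibly the
  -- instance `DivisionRing.toRatAlgebra` found for `cycloField M`.
  let _ : Algebra ℚ (cycloField M) := (cycloField M).algebra'
  suffices σ.toRatAlgHom.comp (IntermediateField.inclusion (cycloField_mono_s5 hM hNM)) =
      (cycloField N).val from DFunLike.congr_fun this ⟨x, hx⟩
  refine IntermediateField.algHom_ext_of_eq_adjoin ℚ rfl fun y hy => ?_
  obtain rfl : y = _ := hy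
  rw [hη.eq_orderOf, ← (hη.isOfFinOrder hN).pow_eq_pow_iff_modEq, pow_one] at hb
  exact (hσ _ ((hη.pow_eq_one_iff_dvd M).mpr hNM)).trans hb

theorem IsPrimitiveRoot.eq_or_eq_inv_of_add_inv_mem_cycloField {N m : ℕ} (hN : N ≠ 0)
    (hm : 0 < m) {ζ ξ : ℂ} (hζ : IsPrimitiveRoot ζ m) (h : ζ + ζ⁻¹ ∈ cycloField N)
    (hgcd : N.gcd m ∣ 2) (hξ : IsPrimitiveRoot ξ m) : ξ = ζ ∨ ξ = ζ⁻¹ := by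
  have : NeZero m := ⟨hm.ne'⟩
  obtain ⟨c, -, rfl⟩ := hζ.eq_pow_of_pow_eq_one hξ.pow_eq_one
  have hc : c.Coprime m := (hζ.pow_iff_coprime hm c).mp hξ
  obtain ⟨b, hbN, hbm⟩ := Nat.chineseRemainder' <|
    Nat.one_modEq_of_dvd_two hgcd (hc.coprime_dvd_right (Nat.gcd_dvd_right N m))
  have hM : N.lcm m ≠ 0 := Nat.lcm_ne_zero hN hm.ne'
  have hbN' : b.Coprime N := hbN.gcd_eq.trans (Nat.gcd_one_left N)
  have hbm' : b.Coprime m := hbm.gcd_eq.trans hc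
  have hbM : b.Coprime (N.lcm m) := (hbN'.mul_right hbm').coprime_dvd_right (Nat.lcm_dvd_mul N m)
  obtain ⟨σ, hσ⟩ := exists_ringHom_cycloField_apply_eq_pow hM hbM
  have hζM : ζ ^ N.lcm m = 1 := (hζ.pow_eq_one_iff_dvd _).mpr (Nat.dvd_lcm_right N m)
  let z : cycloField (N.lcm m) := ⟨ζ, mem_cycloField_of_pow_eq_one_s5 hM hζM⟩
  have hfix :=
    ringHom_apply_eq_self_of_mem_cycloField hM (Nat.dvd_lcm_left N m) hbN hσ (z + z⁻¹) h
  have hζb : ζ ^ b = ζ ^ c :=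
    (hζ.isOfFinOrder hm.ne').pow_eq_pow_iff_modEq.mpr (hζ.eq_orderOf ▸ hbm)
  rw [map_add, map_inv₀, hσ z hζM, hζb] at hfix
  have hζ0 := hζ.ne_zero hm.ne'
  exact eq_or_eq_inv_of_add_inv_eq_add_inv (pow_ne_zero _ hζ0) hζ0 hfix

theorem IsPrimitiveRoot.totient_le_two_of_forall_eq_or_eq_inv {F : Type*} [Field F] {m : ℕ}
    {ζ : F} (hζ : IsPrimitiveRoot ζ m) (h : ∀ ξ : F, IsPrimitiveRoot ξ m → ξ = ζ ∨ ξ = ζ⁻¹) :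
    m.totient ≤ 2 := by
  classical
  rw [← hζ.card_primitiveRoots]
  calc (primitiveRoots m F).card ≤ ({ζ, ζ⁻¹} : Finset F).card :=
        Finset.card_le_card fun ξ hξ => by
          simpa using h ξ (isPrimitiveRoot_of_mem_primitiveRoots hξ)
    _ ≤ 2 := Finset.card_le_two

theorem Nat.Prime.pow_dvd_twelve_of_totient_le_two {p k : ℕ} (hp : p.Prime)
    (h : (p ^ k).totient ≤ 2) : p ^ k ∣ 12 := by
  cases k with
  | zero => exact one_dvd 12
  | succ k =>
    rw [Nat.totient_prime_pow_succ hp] at h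
    have hp3 : p ≤ 3 := by
      have := Nat.one_le_pow k p hp.pos
      have : p - 1 ≤ 2 := le_trans (Nat.le_mul_of_pos_left _ this) h
      omega
    have := hp.two_le
    interval_cases p
    · have : k ≤ 1 :=
        (Nat.pow_le_pow_iff_right (by norm_num : 1 < 2)).mp (by simpa using h : 2 ^ k ≤ 2 ^ 1)
      interval_cases k <;> norm_num
    · have : k = 0 := by
        by_contra hk
        have := Nat.one_lt_pow hk (by norm_num : 1 < 3)
        omega
      subst this
      norm_num

theorem Nat.eq_of_totient_le_two {m : ℕ} (hm : 0 < m) (h : m.totient ≤ 2) :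
    m = 1 ∨ m = 2 ∨ m = 3 ∨ m = 4 ∨ m = 6 := by
  have h12 : m ∣ 12 := (Nat.dvd_iff_prime_pow_dvd_dvd 12 m).mpr fun p k hp hpk =>
    hp.pow_dvd_twelve_of_totient_le_two <|
      (Nat.le_of_dvd (Nat.totient_pos.mpr hm) (Nat.totient_dvd_of_dvd hpk)).trans h
  have : m ≤ 12 := Nat.le_of_dvd (by norm_num) h12
  interval_cases m <;> revert h12 h <;> decide

/-- If `ζ` is a root of unity with `ζ + ζ⁻¹ ∈ ℚ(ζ_N)`, then either `ζ ∈ ℚ(ζ_N)` or `ζ` is a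
primitive 3rd, 4th, or 6th root of unity. -/
theorem rootOfUnity_mem_of_add_inv_mem (N : ℕ) (hN : 0 < N) (ζ : ℂ)
    (hζ : ∃ n : ℕ, 0 < n ∧ ζ ^ n = 1)
    (h : ζ + ζ⁻¹ ∈ cycloField N) :
    ζ ∈ cycloField N ∨ IsPrimitiveRoot ζ 3 ∨ IsPrimitiveRoot ζ 4 ∨ IsPrimitiveRoot ζ 6 := by
  by_cases hmem : ζ ∈ cycloField N
  · exact Or.inl hmem
  right
  have hm : 0 < orderOf ζ := (isOfFinOrder_iff_pow_eq_one.mpr hζ).orderOf_pos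
  have hprim := IsPrimitiveRoot.orderOf ζ
  have hgcd := gcd_dvd_two_of_add_inv_mem_cycloField hN.ne' hm hprim h hmem
  have htot := hprim.totient_le_two_of_forall_eq_or_eq_inv fun _ hξ =>
    hprim.eq_or_eq_inv_of_add_inv_mem_cycloField hN.ne' hm h hgcd hξ
  rcases Nat.eq_of_totient_le_two hm htot with h1 | h2 | h3 | h4 | h6
  · exact absurd (orderOf_eq_one_iff.mp h1 ▸ one_mem _) hmem
  · exact absurd ((h2 ▸ hprim).eq_neg_one_of_two_right ▸ neg_mem (one_mem _)) hmem
  · exact Or.inl (h3 ▸ hprim)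
  · exact Or.inr (Or.inl (h4 ▸ hprim))
  · exact Or.inr (Or.inr (h6 ▸ hprim))
end

section
/- Fix a positive integer X and let p be a prime with p > 6^{(X−1)/2}. Then for every X-element subset S of ℤ/pℤ, there exists k ∈ ℤ/pℤ such that the set {(i, j) ∈ S × S : i − j = k} contains exactly one element. -/
/-!
Index the points of `A ∪ B` by a finite type, so that they form a vector `s` over `ZMod p`. Each
coincidence `a - b = a' - b'` with `a, a' ∈ A` and `b, b' ∈ B` is an integer relation
`e a - e b - e a' + e b'` of `s` modulo `p`, of squared length at most `6`, and at most `4` when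
`A` and `B` are disjoint.

Suppose no difference of `A × B` is unique. If the only real solutions of all these relations are
the combinations of the `d` indicator vectors of the sets involved, then some `n - d` of the
relations, `n = #(A ∪ B)`, together with these indicators form a nonsingular integer matrix `Q`.
If `p ∤ det Q`, then `s` itself is a combination of the indicators modulo `p`, so the sets are
singletons. If `p ∣ det Q`, then `p ^ 2` divides the Gram determinant of the chosen relations,
which Hadamard's inequality bounds by `6 ^ (n - d)`, contradicting the size of `p`.
Otherwise some real solution `u` is not constant on `A` or on `B`. As `a - b = a' - b'` forces
`u a - u b = u a' - u b'`, the maximum points of `u` on `A` and the minimum points of `u` on `B`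
again have no unique difference. Starting from `A = B = S` this yields two disjoint sets, and from
then on the configuration strictly shrinks, which is absurd.
-/

open Finset Module Submodule Matrix

theorem Matrix.det_sq_le_prod_dotProduct_self {ι : Type*} [Fintype ι] [DecidableEq ι]
    (M : Matrix ι ι ℝ) : M.det ^ 2 ≤ ∏ i, M i ⬝ᵥ M i := by
  let e := Fintype.equivFin ι
  rw [← det_reindex_self e M, ← e.symm.prod_comp]
  set N := reindex e e M
  have : Fact (finrank ℝ (EuclideanSpace ℝ (Fin (Fintype.card ι))) = Fintype.card ι) :=
    ⟨finrank_euclideanSpace_fin⟩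
  let b := EuclideanSpace.basisFun (Fin (Fintype.card ι)) ℝ
  let v : Fin (Fintype.card ι) → EuclideanSpace ℝ (Fin (Fintype.card ι)) :=
    fun i => WithLp.toLp 2 (N i)
  have hdet : b.toBasis.det v = N.det := by
    rw [Basis.det_apply, ← det_transpose]
    rfl
  have h := b.toBasis.orientation.abs_volumeForm_apply_le v
  rw [b.toBasis.orientation.volumeForm_robust' b, hdet] at h
  calc N.det ^ 2 = |N.det| ^ 2 := (sq_abs _).symm
    _ ≤ (∏ i, ‖v i‖) ^ 2 := by gcongr
    _ = ∏ i, N i ⬝ᵥ N i := by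
      rw [← prod_pow]
      congr 1 with i
      rw [EuclideanSpace.real_norm_sq_eq]
      simp [v, dotProduct, sq]
    _ = ∏ i, M (e.symm i) ⬝ᵥ M (e.symm i) :=
      prod_congr rfl fun i _ => comp_equiv_dotProduct_comp_equiv _ _ _

theorem Matrix.map_intCast_mul_transpose {ι α β K : Type*} [Fintype ι] [CommRing K]
    (A : Matrix α ι ℤ) (B : Matrix β ι ℤ) :
    A.map (Int.cast : ℤ → K) * (B.map (Int.cast : ℤ → K))ᵀ = (A * Bᵀ).map Int.cast := by
  ext i j
  simp only [mul_apply, map_apply, transpose_apply, Int.cast_sum, Int.cast_mul]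

theorem exists_linearIndependent_sumElim_of_orthogonal_le {E : Type*} [NormedAddCommGroup E]
    [InnerProductSpace ℝ E] [FiniteDimensional ℝ E] {κ δ : Type*} [Fintype κ] [Fintype δ]
    {v : κ → E} {w : δ → E} (hw : LinearIndependent ℝ w) (hvw : ∀ k j, inner ℝ (v k) (w j) = 0)
    (hperp : (span ℝ (Set.range v))ᗮ ≤ span ℝ (Set.range w)) :
    ∃ s : Finset κ, LinearIndependent ℝ (Sum.elim (fun k : s => v k) w) ∧
      #s + Fintype.card δ = finrank ℝ E := by
  classical
  obtain ⟨b, -, -, hspan, hb⟩ :=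
    exists_linearIndepOn_extension (linearIndepOn_empty ℝ v) (Set.empty_subset Set.univ)
  lift b to Finset κ using Set.toFinite b
  have hli : LinearIndependent ℝ (Sum.elim (fun k : b => v k) w) := by
    refine hb.linearIndependent.sum_type hw (IsOrtho.disjoint (isOrtho_span.2 ?_))
    rintro _ ⟨k, rfl⟩ _ ⟨j, rfl⟩
    exact hvw k j
  refine ⟨b, hli, le_antisymm (by simpa using hli.fintype_card_le_finrank) ?_⟩
  have hV : finrank ℝ (span ℝ (Set.range v)) ≤ #b := by
    calc finrank ℝ (span ℝ (Set.range v)) ≤ finrank ℝ (span ℝ (b.image v : Set E)) := by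
          apply Submodule.finrank_mono
          rw [span_le, coe_image, ← Set.image_univ]
          exact hspan
      _ ≤ #b := (finrank_span_finset_le_card _).trans card_image_le
  have hW : finrank ℝ (span ℝ (Set.range v))ᗮ ≤ Fintype.card δ :=
    (Submodule.finrank_mono hperp).trans (finrank_span_eq_card hw).le
  have := (span ℝ (Set.range v)).finrank_add_finrank_orthogonal
  omega

section IntegerRelations

variable {ι κ δ : Type*} [Fintype ι] [Fintype κ] [DecidableEq κ] [Fintype δ] [DecidableEq δ]

theorem Matrix.det_sq_submatrix_fromRows {R : Type*} [CommRing R] (F : Matrix κ ι R)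
    (U : Matrix δ ι R) (e : κ ⊕ δ ≃ ι) (hFU : F * Uᵀ = 0) :
    ((fromRows F U).submatrix id e).det ^ 2 = (F * Fᵀ).det * (U * Uᵀ).det := by
  have hUF : U * Fᵀ = 0 := by simpa using congrArg transpose hFU
  have hsq (Q : Matrix (κ ⊕ δ) (κ ⊕ δ) R) : Q.det ^ 2 = (Q * Qᵀ).det := by
    rw [det_mul, det_transpose, sq]
  rw [hsq, transpose_submatrix, submatrix_mul_transpose_submatrix, transpose_fromRows,
    fromRows_mul_fromCols, hFU, hUF, det_fromBlocks_zero₂₁]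

theorem exists_eq_vecMul_of_det_ne_zero {K : Type*} [Field K] {F : Matrix κ ι K}
    {U : Matrix δ ι K} {e : κ ⊕ δ ≃ ι} (hdet : ((fromRows F U).submatrix id e).det ≠ 0)
    (hFU : F * Uᵀ = 0) {D : δ → K} (hU : U * Uᵀ = diagonal D) (hD : ∀ j, D j ≠ 0)
    {x : ι → K} (hx : F *ᵥ x = 0) : ∃ c, x = c ᵥ* U := by
  let c : δ → K := fun j => (U *ᵥ x) j / D j
  have hF : F *ᵥ (x - c ᵥ* U) = 0 := by
    rw [mulVec_sub, hx, ← mulVec_transpose, mulVec_mulVec, hFU, zero_mulVec, sub_zero]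
  have hU : U *ᵥ (x - c ᵥ* U) = 0 := by
    rw [mulVec_sub, ← mulVec_transpose, mulVec_mulVec, hU, sub_eq_zero]
    ext j
    simp [mulVec_diagonal, c, mul_div_cancel₀ _ (hD j)]
  have hQ : (fromRows F U).submatrix id e *ᵥ ((x - c ᵥ* U) ∘ e) = 0 := by
    simp [submatrix_mulVec_equiv, Function.comp_assoc, fromRows_mulVec, hF, hU]
  refine ⟨c, funext fun i => sub_eq_zero.1 ?_⟩
  simpa using congrFun (eq_zero_of_mulVec_eq_zero hdet hQ) (e.symm i)

theorem exists_det_fromRows_ne_zero (R : Matrix κ ι ℝ) (U : Matrix δ ι ℝ) (hRU : R * Uᵀ = 0)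
    {D : δ → ℝ} (hU : U * Uᵀ = diagonal D) (hD : ∀ j, D j ≠ 0)
    (hker : ∀ u, R *ᵥ u = 0 → ∃ c, u = c ᵥ* U) :
    ∃ (s : Finset κ) (e : s ⊕ δ ≃ ι),
      ((fromRows (R.submatrix (↑) id) U).submatrix id e).det ≠ 0 := by
  let v (k : κ) : EuclideanSpace ℝ ι := WithLp.toLp 2 (R.row k)
  let w (j : δ) : EuclideanSpace ℝ ι := WithLp.toLp 2 (U.row j)
  have hinner (x y : ι → ℝ) : inner ℝ (WithLp.toLp 2 x) (WithLp.toLp 2 y) = x ⬝ᵥ y := by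
    rw [EuclideanSpace.inner_toLp_toLp, star_trivial, dotProduct_comm]
  have hw : LinearIndependent ℝ w := by
    refine linearIndependent_of_ne_zero_of_inner_eq_zero (fun j h => hD j ?_) fun j k hjk => ?_
    · rw [← diagonal_apply_eq D j, ← hU]
      change U.row j ⬝ᵥ U.row j = 0
      rw [← hinner, show WithLp.toLp 2 (U.row j) = 0 from h, inner_zero_left]
    · change inner ℝ (w j) (w k) = 0
      rw [hinner]
      exact (congrFun (congrFun hU j) k).trans (diagonal_apply_ne _ hjk)
  have hvw (k : κ) (j : δ) : inner ℝ (v k) (w j) = 0 := by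
    rw [hinner]
    exact congrFun (congrFun hRU k) j
  have hperp : (span ℝ (Set.range v))ᗮ ≤ span ℝ (Set.range w) := by
    intro u hu
    have hRu : R *ᵥ u.ofLp = 0 := funext fun k => by
      have := inner_right_of_mem_orthogonal (subset_span (Set.mem_range_self k)) hu
      rwa [EuclideanSpace.inner_eq_star_dotProduct, star_trivial, dotProduct_comm] at this
    obtain ⟨c, hc⟩ := hker u.ofLp hRu
    refine (mem_span_range_iff_exists_fun ℝ).2 ⟨c, ?_⟩
    ext i
    simp [w, hc, vecMul, dotProduct]
  obtain ⟨s, hli, hcard⟩ := exists_linearIndependent_sumElim_of_orthogonal_le hw hvw hperp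
  let e := Fintype.equivOfCardEq (α := s ⊕ δ) (β := ι) (by simpa using hcard)
  let L := (LinearEquiv.funCongrLeft ℝ ℝ e).toLinearMap ∘ₗ
    (WithLp.linearEquiv 2 ℝ (ι → ℝ)).toLinearMap
  have hrows : ((fromRows (R.submatrix (↑) id) U).submatrix id e).row =
      L ∘ Sum.elim (fun k : s => v k) w := by
    ext (a | a) b <;> rfl
  refine ⟨s, e, ((isUnit_iff_isUnit_det _).1 (linearIndependent_rows_iff_isUnit.1 ?_)).ne_zero⟩
  rw [hrows]
  exact hli.map' L (by simp [L])

theorem sq_le_pow_card_of_dvd_det {p : ℕ} (hp : p.Prime) {F : Matrix κ ι ℤ}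
    {U : Matrix δ ι ℤ} {e : κ ⊕ δ ≃ ι} {D : δ → ℤ} {C : ℕ} (hFU : F * Uᵀ = 0)
    (hU : U * Uᵀ = diagonal D) (hD : ∀ j, ¬ (p : ℤ) ∣ D j) (hFC : ∀ k, F k ⬝ᵥ F k ≤ C)
    (hdet : ((fromRows F U).submatrix id e).det ≠ 0)
    (hpdet : (p : ℤ) ∣ ((fromRows F U).submatrix id e).det) :
    p ^ 2 ≤ C ^ Fintype.card κ := by
  set Q := (fromRows F U).submatrix id e
  set G := (F * Fᵀ).det
  have hsq : Q.det ^ 2 = G * ∏ j, D j := by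
    rw [det_sq_submatrix_fromRows F U e hFU, hU, det_diagonal]
  have hDpos : 0 < ∏ j, D j := by
    refine prod_pos fun j _ => lt_of_le_of_ne ?_ fun h => hD j (h ▸ dvd_zero _)
    rw [← diagonal_apply_eq D j, ← hU]
    exact sum_nonneg fun i _ => mul_self_nonneg (U j i)
  have hHadamard : Q.det ^ 2 ≤ C ^ Fintype.card κ * ∏ j, D j := by
    have h := det_sq_le_prod_dotProduct_self (Q.map (Int.cast : ℤ → ℝ))
    simp only [← Int.cast_det, map_apply, dotProduct, ← Int.cast_mul, ← Int.cast_sum,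
      ← Int.cast_prod, ← Int.cast_pow] at h
    calc Q.det ^ 2 ≤ ∏ a, Q a ⬝ᵥ Q a := by exact_mod_cast h
      _ = (∏ k, F k ⬝ᵥ F k) * ∏ j, D j := by
        simp only [Q, ← diagonal_apply_eq D, ← hU, Fintype.prod_sum_type]
        congr 1 <;> exact prod_congr rfl fun a _ => comp_equiv_dotProduct_comp_equiv _ _ e
      _ ≤ C ^ Fintype.card κ * ∏ j, D j := by
        gcongr
        calc ∏ k, F k ⬝ᵥ F k ≤ ∏ _k : κ, (C : ℤ) :=
              prod_le_prod (fun k _ => sum_nonneg fun i _ => mul_self_nonneg (F k i))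
                fun k _ => hFC k
          _ = C ^ Fintype.card κ := by simp
  have hG : G ≤ C ^ Fintype.card κ := le_of_mul_le_mul_right (hsq ▸ hHadamard) hDpos
  have hpG : (p : ℤ) ^ 2 ∣ G := by
    have hcop : IsCoprime ((p : ℤ) ^ 2) (∏ j, D j) := by
      refine IsCoprime.pow_left ((Prime.coprime_iff_not_dvd (Nat.prime_iff_prime_int.1 hp)).2 ?_)
      rw [Prime.dvd_finsetProd_iff (Nat.prime_iff_prime_int.1 hp)]
      exact fun ⟨j, _, h⟩ => hD j h
    exact hcop.dvd_of_dvd_mul_right (hsq ▸ pow_dvd_pow_of_dvd hpdet 2)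
  have hGpos : 0 < G := (mul_pos_iff_of_pos_right hDpos).1 (hsq ▸ by positivity)
  exact_mod_cast (Int.le_of_dvd hGpos hpG).trans hG

theorem exists_eq_vecMul_of_ker_le {p : ℕ} [Fact p.Prime] {R : Matrix κ ι ℤ}
    {U : Matrix δ ι ℤ} {D : δ → ℤ} {C : ℕ} {s : ι → ZMod p} (hRs : R.map Int.cast *ᵥ s = 0)
    (hRC : ∀ k, R k ⬝ᵥ R k ≤ C) (hRU : R * Uᵀ = 0) (hU : U * Uᵀ = diagonal D)
    (hD : ∀ j, ¬ (p : ℤ) ∣ D j)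
    (hker : ∀ u : ι → ℝ, R.map Int.cast *ᵥ u = 0 → ∃ c, u = c ᵥ* U.map Int.cast)
    (hbound : C ^ (Fintype.card ι - Fintype.card δ) < p ^ 2) :
    ∃ c, s = c ᵥ* U.map Int.cast := by
  have hcastR (K : Type) [CommRing K] :
      R.map (Int.cast : ℤ → K) * (U.map (Int.cast : ℤ → K))ᵀ = 0 := by
    simp only [map_intCast_mul_transpose, hRU, Matrix.map_zero _ Int.cast_zero]
  have hcastU (K : Type) [CommRing K] :
      U.map (Int.cast : ℤ → K) * (U.map (Int.cast : ℤ → K))ᵀ = diagonal (Int.cast ∘ D) := by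
    simp only [map_intCast_mul_transpose, hU, diagonal_map Int.cast_zero]
    rfl
  obtain ⟨t, e, hdet⟩ := exists_det_fromRows_ne_zero (R.map (Int.cast : ℤ → ℝ)) (U.map Int.cast)
    (hcastR ℝ) (hcastU ℝ) (fun j => Int.cast_ne_zero.2 fun h => hD j (h ▸ dvd_zero _)) hker
  set F := R.submatrix ((↑) : t → κ) id
  have hQ (K : Type) [CommRing K] : ((fromRows F U).submatrix id e).det.cast =
      ((fromRows ((R.map (Int.cast : ℤ → K)).submatrix (↑) id) (U.map Int.cast)).submatrix
        id e).det := by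
    rw [Int.cast_det, ← submatrix_map, fromRows_map]
    rfl
  by_cases hpQ : (p : ℤ) ∣ ((fromRows F U).submatrix id e).det
  · have hle := sq_le_pow_card_of_dvd_det (F := F) Fact.out
      (by ext k j; exact congrFun (congrFun hRU k) j) hU hD (fun k => hRC k)
      (fun h => hdet (by rw [← hQ, h, Int.cast_zero])) hpQ
    have hcard := Fintype.card_congr e
    rw [Fintype.card_sum] at hcard
    rw [show Fintype.card t = Fintype.card ι - Fintype.card δ by omega] at hle
    omega
  refine exists_eq_vecMul_of_det_ne_zero (F := (R.map (Int.cast : ℤ → ZMod p)).submatrix (↑) id)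
    (e := e) ?_ (by ext k j; exact congrFun (congrFun (hcastR _) k) j) (hcastU _)
    (fun j h => hD j ((ZMod.intCast_zmod_eq_zero_iff_dvd _ _).1 h))
    (by ext k; exact congrFun hRs k)
  rw [← hQ]
  exact fun h => hpQ ((ZMod.intCast_zmod_eq_zero_iff_dvd _ _).1 h)

end IntegerRelations

section DiffRelVec

variable {ι : Type*} [Fintype ι] [DecidableEq ι]

def diffRelVec (a b a' b' : ι) : ι → ℤ :=
  Pi.single a 1 - Pi.single b 1 - (Pi.single a' 1 - Pi.single b' 1)

theorem intCast_diffRelVec_dotProduct {K : Type*} [CommRing K] (a b a' b' : ι) (f : ι → K) :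
    (fun i => (diffRelVec a b a' b' i : K)) ⬝ᵥ f = f a - f b - (f a' - f b') := by
  simp [diffRelVec, dotProduct, sub_mul, sum_sub_distrib, Pi.single_apply]

theorem diffRelVec_dotProduct (a b a' b' : ι) (f : ι → ℤ) :
    diffRelVec a b a' b' ⬝ᵥ f = f a - f b - (f a' - f b') := by
  simpa using intCast_diffRelVec_dotProduct a b a' b' f

theorem diffRelVec_dotProduct_self (a b a' b' : ι) :
    diffRelVec a b a' b' ⬝ᵥ diffRelVec a b a' b' =
      4 + 2 * ((if a = b' then 1 else 0) + (if b = a' then 1 else 0) - (if a = b then 1 else 0)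
        - (if a = a' then 1 else 0) - (if b = b' then 1 else 0) - (if a' = b' then 1 else 0)) := by
  rw [diffRelVec_dotProduct]
  simp only [diffRelVec, Pi.sub_apply, Pi.single_apply, if_true, @eq_comm _ b a, @eq_comm _ a' a,
    @eq_comm _ b' a, @eq_comm _ a' b, @eq_comm _ b' b, @eq_comm _ b' a']
  ring

theorem diffRelVec_dotProduct_self_le_four {a b a' b' : ι} (hab' : a ≠ b') (hba' : b ≠ a') :
    diffRelVec a b a' b' ⬝ᵥ diffRelVec a b a' b' ≤ 4 := by
  rw [diffRelVec_dotProduct_self, if_neg hab', if_neg hba']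
  split_ifs <;> omega

theorem diffRelVec_dotProduct_self_le_six {a b a' b' : ι} (h : a = b' → b = a' → a = b) :
    diffRelVec a b a' b' ⬝ᵥ diffRelVec a b a' b' ≤ 6 := by
  rw [diffRelVec_dotProduct_self]
  split_ifs <;> first | omega | exact absurd (h ‹_› ‹_›) ‹_›

end DiffRelVec

section UniqueDifference

variable {G : Type*} [AddCommGroup G] [DecidableEq G]

def HasUniqueDiff (A B : Finset G) : Prop :=
  ∃ k, #{ab ∈ A ×ˢ B | ab.1 - ab.2 = k} = 1

theorem hasUniqueDiff_singleton (x y : G) : HasUniqueDiff {x} {y} :=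
  ⟨x - y, by simp [filter_singleton]⟩

theorem not_hasUniqueDiff_iff {A B : Finset G} :
    ¬HasUniqueDiff A B ↔ ∀ a ∈ A, ∀ b ∈ B,
      ∃ a' ∈ A, ∃ b' ∈ B, a' - b' = a - b ∧ (a', b') ≠ (a, b) := by
  constructor
  · intro h a ha b hb
    have hmem : (a, b) ∈ {ab ∈ A ×ˢ B | ab.1 - ab.2 = a - b} := by simp [ha, hb]
    have hcard : 1 < #{ab ∈ A ×ˢ B | ab.1 - ab.2 = a - b} :=
      lt_of_le_of_ne (card_pos.2 ⟨_, hmem⟩) (Ne.symm fun h1 => h ⟨a - b, h1⟩)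
    obtain ⟨⟨a', b'⟩, hmem', hne⟩ := exists_mem_ne hcard (a, b)
    simp only [mem_filter, mem_product] at hmem'
    exact ⟨a', hmem'.1.1, b', hmem'.1.2, hmem'.2, hne⟩
  · rintro h ⟨k, hk⟩
    obtain ⟨⟨a, b⟩, hab⟩ := card_eq_one.1 hk
    have hmem : (a, b) ∈ {ab ∈ A ×ˢ B | ab.1 - ab.2 = k} := hab ▸ mem_singleton_self _
    simp only [mem_filter, mem_product] at hmem
    obtain ⟨a', ha', b', hb', hdiff, hne⟩ := h a hmem.1.1 b hmem.1.2
    have hmem' : (a', b') ∈ {ab ∈ A ×ˢ B | ab.1 - ab.2 = k} := by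
      simp [ha', hb', hdiff, hmem.2]
    exact hne (by simpa [hab] using hmem')

end UniqueDifference

section Extrema

variable {α β : Type*} [LinearOrder β]

def argmaxSet (u : α → β) (A : Finset α) : Finset α := {a ∈ A | ∀ x ∈ A, u x ≤ u a}

def argminSet (u : α → β) (B : Finset α) : Finset α := {b ∈ B | ∀ y ∈ B, u b ≤ u y}

variable {u : α → β} {A B : Finset α}

theorem argmaxSet_subset : argmaxSet u A ⊆ A := filter_subset _ _

theorem argminSet_subset : argminSet u B ⊆ B := filter_subset _ _

theorem argmaxSet_nonempty (hA : A.Nonempty) : (argmaxSet u A).Nonempty := by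
  obtain ⟨a, ha, hmax⟩ := exists_max_image A u hA
  exact ⟨a, mem_filter.2 ⟨ha, hmax⟩⟩

theorem argminSet_nonempty (hB : B.Nonempty) : (argminSet u B).Nonempty := by
  obtain ⟨b, hb, hmin⟩ := exists_min_image B u hB
  exact ⟨b, mem_filter.2 ⟨hb, hmin⟩⟩

theorem argmaxSet_eq_self_iff : argmaxSet u A = A ↔ ∀ x ∈ A, ∀ y ∈ A, u x = u y := by
  rw [argmaxSet, filter_eq_self]
  exact ⟨fun h x hx y hy => le_antisymm (h y hy x hx) (h x hx y hy),
    fun h a ha x hx => (h x hx a ha).le⟩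

theorem argminSet_eq_self_iff : argminSet u B = B ↔ ∀ x ∈ B, ∀ y ∈ B, u x = u y := by
  rw [argminSet, filter_eq_self]
  exact ⟨fun h x hx y hy => le_antisymm (h x hx y hy) (h y hy x hx),
    fun h a ha x hx => (h a ha x hx).le⟩

theorem disjoint_argmaxSet_argminSet (h : ∃ x ∈ A, ∃ y ∈ A, u x ≠ u y) :
    Disjoint (argmaxSet u A) (argminSet u A) := by
  obtain ⟨x, hx, y, hy, hxy⟩ := h
  refine disjoint_left.2 fun z hzmax hzmin => hxy ?_
  have hmax := (mem_filter.1 hzmax).2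
  have hmin := (mem_filter.1 hzmin).2
  exact (le_antisymm (hmax x hx) (hmin x hx)).trans (le_antisymm (hmax y hy) (hmin y hy)).symm

theorem disjoint_argmaxSet_argminSet_of_forall_ne {S T : Finset α} (hTS : T ⊆ S) (hS : S.Nonempty)
    {w : ↥T → β} (hw : ∀ c, w ≠ fun _ => c) {u : α → β} (hu : ∀ t : ↥T, u t = w t) :
    Disjoint (argmaxSet u S) (argminSet u S) := by
  refine disjoint_argmaxSet_argminSet ?_
  by_contra! hconst
  obtain ⟨x₀, hx₀⟩ := hS
  exact hw (u x₀) (funext fun t => (hu t).symm.trans (hconst _ (hTS t.2) _ hx₀))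

end Extrema

theorem not_hasUniqueDiff_argmaxSet_argminSet {G : Type*} [AddCommGroup G] [DecidableEq G]
    {A B : Finset G} {u : G → ℝ}
    (hu : ∀ a ∈ A, ∀ b ∈ B, ∀ a' ∈ A, ∀ b' ∈ B, a - b = a' - b' → u a - u b = u a' - u b')
    (h : ¬HasUniqueDiff A B) : ¬HasUniqueDiff (argmaxSet u A) (argminSet u B) := by
  rw [not_hasUniqueDiff_iff] at h ⊢
  intro a ha b hb
  have hamax := (mem_filter.1 ha).2
  have hbmin := (mem_filter.1 hb).2
  obtain ⟨a', ha', b', hb', hdiff, hne⟩ := h a (argmaxSet_subset ha) b (argminSet_subset hb)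
  have huab := hu a' ha' b' hb' a (argmaxSet_subset ha) b (argminSet_subset hb) hdiff
  have ha'le := hamax a' ha'
  have hb'ge := hbmin b' hb'
  refine ⟨a', mem_filter.2 ⟨ha', fun x hx => ?_⟩, b', mem_filter.2 ⟨hb', fun y hy => ?_⟩,
    hdiff, hne⟩
  · linarith [hamax x hx]
  · linarith [hbmin y hy]

section Coincidences

variable {K : Type*} [CommRing K] [DecidableEq K] (A B : Finset K)

/-- The quadruples `(a, b, a', b') ∈ A × B × A × B` with `a - b = a' - b'`. -/
abbrev Coincidence : Type _ :=
  {q : ↥(A ∪ B) × ↥(A ∪ B) × ↥(A ∪ B) × ↥(A ∪ B) // (q.1 : K) ∈ A ∧ (q.2.1 : K) ∈ B ∧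
    (q.2.2.1 : K) ∈ A ∧ (q.2.2.2 : K) ∈ B ∧ (q.1 : K) - q.2.1 = q.2.2.1 - q.2.2.2}

def coincidenceMatrix : Matrix (Coincidence A B) ↥(A ∪ B) ℤ :=
  of fun q => diffRelVec q.1.1 q.1.2.1 q.1.2.2.1 q.1.2.2.2

variable {A B}

theorem coincidenceMatrix_map_mulVec_val :
    (coincidenceMatrix A B).map Int.cast *ᵥ (Subtype.val : ↥(A ∪ B) → K) = 0 := by
  ext ⟨⟨a, b, a', b'⟩, -, -, -, -, h⟩
  exact (intCast_diffRelVec_dotProduct a b a' b' _).trans (sub_eq_zero.2 h)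

theorem coincidenceMatrix_mulVec_comp_val {w : K → ℤ} (hA : ∀ x ∈ A, ∀ y ∈ A, w x = w y)
    (hB : ∀ x ∈ B, ∀ y ∈ B, w x = w y) : coincidenceMatrix A B *ᵥ (w ∘ Subtype.val) = 0 := by
  ext ⟨⟨a, b, a', b'⟩, ha, hb, ha', hb', -⟩
  simp only [mulVec, coincidenceMatrix, of_apply, diffRelVec_dotProduct, Function.comp_apply]
  rw [hA a ha a' ha', hB b hb b' hb', Pi.zero_apply]
  ring

theorem coincidenceMatrix_dotProduct_self_le_four (hAB : Disjoint A B) (q : Coincidence A B) :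
    coincidenceMatrix A B q ⬝ᵥ coincidenceMatrix A B q ≤ 4 := by
  obtain ⟨⟨a, b, a', b'⟩, ha, hb, ha', hb', -⟩ := q
  exact diffRelVec_dotProduct_self_le_four (fun h => disjoint_left.1 hAB ha (h ▸ hb'))
    (fun h => disjoint_left.1 hAB ha' (h ▸ hb))

theorem coincidenceMatrix_dotProduct_self_le_six [NoZeroDivisors K] (h2 : (2 : K) ≠ 0)
    (q : Coincidence A B) : coincidenceMatrix A B q ⬝ᵥ coincidenceMatrix A B q ≤ 6 := by
  obtain ⟨⟨a, b, a', b'⟩, -, -, -, -, h⟩ := q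
  refine diffRelVec_dotProduct_self_le_six fun (hab' : a = b') (hba' : b = a') => Subtype.ext ?_
  subst hab' hba'
  dsimp only at h
  have : (2 : K) * (a - b) = 0 := by linear_combination h
  exact sub_eq_zero.1 ((mul_eq_zero.1 this).resolve_left h2)

theorem sub_eq_sub_of_coincidenceMatrix_map_mulVec {u : ↥(A ∪ B) → ℝ}
    (hu : (coincidenceMatrix A B).map Int.cast *ᵥ u = 0) {v : K → ℝ}
    (hv : ∀ t : ↥(A ∪ B), v t = u t) :
    ∀ a ∈ A, ∀ b ∈ B, ∀ a' ∈ A, ∀ b' ∈ B, a - b = a' - b' → v a - v b = v a' - v b' := by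
  intro a ha b hb a' ha' b' hb' h
  have := congrFun hu ⟨(⟨a, mem_union_left _ ha⟩, ⟨b, mem_union_right _ hb⟩,
    ⟨a', mem_union_left _ ha'⟩, ⟨b', mem_union_right _ hb'⟩), ha, hb, ha', hb', h⟩
  simp only [mulVec, map_apply, coincidenceMatrix, of_apply, Pi.zero_apply] at this
  rw [intCast_diffRelVec_dotProduct, sub_eq_zero] at this
  rwa [hv ⟨a, _⟩, hv ⟨b, _⟩, hv ⟨a', _⟩, hv ⟨b', _⟩]

end Coincidences

section PairIndicator

variable {K : Type*} [DecidableEq K] {A B : Finset K}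

theorem sum_indicator_mul_indicator {T X Y : Finset K} (h : X ⊆ T) :
    ∑ t : ↥T, (if (t : K) ∈ X then (1 : ℤ) else 0) * (if (t : K) ∈ Y then 1 else 0) =
      #(X ∩ Y) := by
  rw [sum_coe_sort T (fun x => (if x ∈ X then (1 : ℤ) else 0) * (if x ∈ Y then 1 else 0))]
  simp only [ite_zero_mul_ite_zero, mul_one, ← mem_inter, sum_boole, filter_mem_eq_inter,
    inter_eq_right.2 (inter_subset_left.trans h)]

def pairIndicator (A B : Finset K) : Matrix (Fin 2) ↥(A ∪ B) ℤ :=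
  of ![fun t => if (t : K) ∈ A then 1 else 0, fun t => if (t : K) ∈ B then 1 else 0]

theorem pairIndicator_mul_transpose (hAB : Disjoint A B) :
    pairIndicator A B * (pairIndicator A B)ᵀ = diagonal ![(#A : ℤ), #B] := by
  have hAB' : A ∩ B = ∅ := disjoint_iff_inter_eq_empty.1 hAB
  ext i j
  fin_cases i <;> fin_cases j <;>
    simp only [mul_apply, transpose_apply, pairIndicator, of_apply, Fin.zero_eta, Fin.mk_one,
      cons_val_zero, cons_val_one]
  · rw [sum_indicator_mul_indicator subset_union_left, inter_self]; rfl
  · rw [sum_indicator_mul_indicator subset_union_left, hAB']; rfl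
  · rw [sum_indicator_mul_indicator subset_union_right, inter_comm, hAB']; rfl
  · rw [sum_indicator_mul_indicator subset_union_right, inter_self]; rfl

theorem coincidenceMatrix_mul_pairIndicator_transpose [CommRing K] (hAB : Disjoint A B) :
    coincidenceMatrix A B * (pairIndicator A B)ᵀ = 0 := by
  ext q j
  fin_cases j
  · refine congrFun (coincidenceMatrix_mulVec_comp_val (w := fun x => if x ∈ A then 1 else 0)
      (fun x hx y hy => by simp [hx, hy]) (fun x hx y hy => ?_)) q
    simp [disjoint_right.1 hAB hx, disjoint_right.1 hAB hy]
  · refine congrFun (coincidenceMatrix_mulVec_comp_val (w := fun x => if x ∈ B then 1 else 0)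
      (fun x hx y hy => ?_) (fun x hx y hy => by simp [hx, hy])) q
    simp [disjoint_left.1 hAB hx, disjoint_left.1 hAB hy]

theorem vecMul_map_pairIndicator_apply {R : Type*} [CommRing R] (c : Fin 2 → R)
    (t : ↥(A ∪ B)) : (c ᵥ* (pairIndicator A B).map Int.cast) t =
      (if (t : K) ∈ A then c 0 else 0) + if (t : K) ∈ B then c 1 else 0 := by
  simp [vecMul, dotProduct, Fin.sum_univ_two, pairIndicator]

theorem subset_singleton_of_val_eq_vecMul_pairIndicator [CommRing K] (hAB : Disjoint A B)
    {c : Fin 2 → K} (hc : Subtype.val = c ᵥ* (pairIndicator A B).map Int.cast) :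
    A ⊆ {c 0} ∧ B ⊆ {c 1} := by
  refine ⟨fun a ha => ?_, fun b hb => ?_⟩
  · simpa [vecMul_map_pairIndicator_apply, ha, disjoint_left.1 hAB ha] using
      congrFun hc ⟨a, mem_union_left _ ha⟩
  · simpa [vecMul_map_pairIndicator_apply, hb, disjoint_right.1 hAB hb] using
      congrFun hc ⟨b, mem_union_right _ hb⟩

theorem card_argmaxSet_add_card_argminSet_lt (hAB : Disjoint A B) (hA : A.Nonempty)
    (hB : B.Nonempty) {u : ↥(A ∪ B) → ℝ} (hu : ∀ c, u ≠ c ᵥ* (pairIndicator A B).map Int.cast)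
    {v : K → ℝ} (hv : ∀ t : ↥(A ∪ B), v t = u t) :
    #(argmaxSet v A) + #(argminSet v B) < #A + #B := by
  have hmax := card_le_card (argmaxSet_subset (u := v) (A := A))
  have hmin := card_le_card (argminSet_subset (u := v) (B := B))
  by_contra hge
  have hA' : argmaxSet v A = A := eq_of_subset_of_card_le argmaxSet_subset (by omega)
  have hB' : argminSet v B = B := eq_of_subset_of_card_le argminSet_subset (by omega)
  obtain ⟨a₀, ha₀⟩ := hA
  obtain ⟨b₀, hb₀⟩ := hB
  refine hu ![v a₀, v b₀] (funext fun t => ?_)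
  rw [vecMul_map_pairIndicator_apply, ← hv]
  rcases mem_union.1 t.2 with ht | ht
  · simp [ht, disjoint_left.1 hAB ht, argmaxSet_eq_self_iff.1 hA' _ ht _ ha₀]
  · simp [ht, disjoint_right.1 hAB ht, argminSet_eq_self_iff.1 hB' _ ht _ hb₀]

end PairIndicator

theorem lt_of_six_pow_pred_lt_sq {n p : ℕ} (h : 6 ^ (n - 1) < p ^ 2) : n < p := by
  have hn : n ≤ 2 ^ (n - 1) := by
    have := Nat.lt_two_pow_self (n := n - 1)
    omega
  have : n ^ 2 < p ^ 2 := calc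
    n ^ 2 ≤ (2 ^ (n - 1)) ^ 2 := Nat.pow_le_pow_left hn 2
    _ = 4 ^ (n - 1) := by rw [← pow_mul, mul_comm, pow_mul]; norm_num
    _ ≤ 6 ^ (n - 1) := Nat.pow_le_pow_left (by norm_num) _
    _ < p ^ 2 := h
  exact lt_of_pow_lt_pow_left₀ 2 (Nat.zero_le _) this

theorem pow_lt_sq_of_rpow_half_lt {b n p : ℕ} (h : (b : ℝ) ^ ((n : ℝ) / 2) < p) :
    b ^ n < p ^ 2 := by
  have hsq : ((b : ℝ) ^ ((n : ℝ) / 2)) ^ 2 = (b : ℝ) ^ n := by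
    rw [← Real.rpow_mul_natCast (Nat.cast_nonneg b), ← Real.rpow_natCast]
    congr 1
    push_cast
    ring
  have := pow_lt_pow_left₀ h (by positivity) two_ne_zero
  rw [hsq] at this
  exact_mod_cast this

section PrimeField

variable {p : ℕ} [Fact p.Prime]

theorem hasUniqueDiff_of_disjoint {A B : Finset (ZMod p)} (hA : A.Nonempty) (hB : B.Nonempty)
    (hAB : Disjoint A B) (hp : #A + #B < p) (hbound : 4 ^ (#A + #B - 2) < p ^ 2) :
    HasUniqueDiff A B := by
  induction hn : #A + #B using Nat.strong_induction_on generalizing A B with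
  | _ n ih =>
  subst hn
  by_contra hnot
  have hcard : Fintype.card ↥(A ∪ B) = #A + #B := by
    rw [Fintype.card_coe, card_union_of_disjoint hAB]
  have hD (X : Finset (ZMod p)) (hX : X.Nonempty) (hXp : #X < p) : ¬ (p : ℤ) ∣ #X :=
    Int.natCast_dvd_natCast.not.2 (Nat.not_dvd_of_pos_of_lt (card_pos.2 hX) hXp)
  by_cases hker : ∀ u : ↥(A ∪ B) → ℝ, (coincidenceMatrix A B).map Int.cast *ᵥ u = 0 →
      ∃ c, u = c ᵥ* (pairIndicator A B).map Int.cast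
  · obtain ⟨c, hc⟩ := exists_eq_vecMul_of_ker_le coincidenceMatrix_map_mulVec_val
      (coincidenceMatrix_dotProduct_self_le_four hAB)
      (coincidenceMatrix_mul_pairIndicator_transpose hAB) (pairIndicator_mul_transpose hAB)
      (fun j => by fin_cases j <;> [exact hD A hA (by omega); exact hD B hB (by omega)]) hker
      (by rwa [hcard, Fintype.card_fin])
    obtain ⟨hAc, hBc⟩ := subset_singleton_of_val_eq_vecMul_pairIndicator hAB hc
    rw [hA.subset_singleton_iff] at hAc
    rw [hB.subset_singleton_iff] at hBc
    exact hnot (hAc ▸ hBc ▸ hasUniqueDiff_singleton _ _)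
  push Not at hker
  obtain ⟨u, hu, hnotc⟩ := hker
  obtain ⟨v, hv⟩ : ∃ v : ZMod p → ℝ, ∀ t : ↥(A ∪ B), v t = u t :=
    ⟨_, Subtype.val_injective.extend_apply u 0⟩
  have hlt := card_argmaxSet_add_card_argminSet_lt hAB hA hB hnotc hv
  exact not_hasUniqueDiff_argmaxSet_argminSet
    (sub_eq_sub_of_coincidenceMatrix_map_mulVec hu hv) hnot
    (ih _ hlt (argmaxSet_nonempty hA) (argminSet_nonempty hB)
      (hAB.mono argmaxSet_subset argminSet_subset) (hlt.trans hp)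
      ((Nat.pow_le_pow_right (by norm_num) (Nat.sub_le_sub_right hlt.le 2)).trans_lt hbound) rfl)

theorem hasUniqueDiff_self (h2 : (2 : ZMod p) ≠ 0) {S : Finset (ZMod p)} (hS : S.Nonempty)
    (hbound : 6 ^ (#S - 1) < p ^ 2) : HasUniqueDiff S S := by
  by_contra hnot
  have hSp : #S < p := lt_of_six_pow_pred_lt_sq hbound
  have hcard : Fintype.card ↥(S ∪ S) = #S := by rw [Fintype.card_coe, union_self]
  let U : Matrix (Fin 1) ↥(S ∪ S) ℤ := of fun _ _ => 1
  have hU : U * Uᵀ = diagonal fun _ => (#S : ℤ) := by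
    ext i j
    simp [U, mul_apply, Subsingleton.elim i j]
  by_cases hker : ∀ u : ↥(S ∪ S) → ℝ, (coincidenceMatrix S S).map Int.cast *ᵥ u = 0 →
      ∃ c, u = c ᵥ* U.map Int.cast
  · obtain ⟨c, hc⟩ := exists_eq_vecMul_of_ker_le coincidenceMatrix_map_mulVec_val
      (coincidenceMatrix_dotProduct_self_le_six h2)
      (by ext q j; exact congrFun (coincidenceMatrix_mulVec_comp_val (w := fun _ => 1)
        (fun _ _ _ _ => rfl) (fun _ _ _ _ => rfl)) q) hU
      (fun _ => Int.natCast_dvd_natCast.not.2 (Nat.not_dvd_of_pos_of_lt (card_pos.2 hS) hSp))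
      hker (by rwa [hcard, Fintype.card_fin])
    have hSc : S ⊆ {c 0} := fun x hx => by
      simpa [U, vecMul, dotProduct] using congrFun hc ⟨x, mem_union_left _ hx⟩
    exact hnot ((hS.subset_singleton_iff.1 hSc) ▸ hasUniqueDiff_singleton _ _)
  push Not at hker
  obtain ⟨u, hu, hnotc⟩ := hker
  obtain ⟨v, hv⟩ : ∃ v : ZMod p → ℝ, ∀ t : ↥(S ∪ S), v t = u t :=
    ⟨_, Subtype.val_injective.extend_apply u 0⟩
  have hdisj : Disjoint (argmaxSet v S) (argminSet v S) := by
    refine disjoint_argmaxSet_argminSet_of_forall_ne (union_self S).subset hS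
      (fun c h => hnotc ![c] (h.trans ?_)) hv
    ext t
    simp [U, vecMul, dotProduct]
  have hsum : #(argmaxSet v S) + #(argminSet v S) ≤ #S := by
    rw [← card_union_of_disjoint hdisj]
    exact card_le_card (union_subset argmaxSet_subset argminSet_subset)
  exact not_hasUniqueDiff_argmaxSet_argminSet
    (sub_eq_sub_of_coincidenceMatrix_map_mulVec hu hv) hnot
    (hasUniqueDiff_of_disjoint (argmaxSet_nonempty hS) (argminSet_nonempty hS) hdisj (by omega)
      (calc 4 ^ (#(argmaxSet v S) + #(argminSet v S) - 2) ≤ 6 ^ (#S - 1) :=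
            (Nat.pow_le_pow_left (by norm_num) _).trans
              (Nat.pow_le_pow_right (by norm_num) (by omega))
        _ < p ^ 2 := hbound))

end PrimeField

/-- Let `X` be a positive integer and `p` a prime with `p > 6^{(X-1)/2}`. Then every
`X`-element subset `S` of `ℤ/pℤ` has a difference `k` realized by exactly one ordered pair
of elements of `S`. -/
theorem exists_unique_difference (X p : ℕ) (hX : 0 < X) (hp : p.Prime)
    (hbig : (6 : ℝ) ^ (((X : ℝ) - 1) / 2) < p)
    (S : Finset (ZMod p)) (hS : S.card = X) :
    ∃ k : ZMod p, ((S ×ˢ S).filter (fun ij => ij.1 - ij.2 = k)).card = 1 := by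
  have : Fact p.Prime := ⟨hp⟩
  have hbound : 6 ^ (X - 1) < p ^ 2 :=
    pow_lt_sq_of_rpow_half_lt (by rwa [Nat.cast_pred hX, Nat.cast_ofNat])
  obtain hX1 | hX2 := (Nat.one_le_iff_ne_zero.2 hX.ne').eq_or_lt
  · obtain ⟨x, rfl⟩ := card_eq_one.1 (hS.trans hX1.symm)
    exact hasUniqueDiff_singleton x x
  have hp2 : 2 < p := by
    by_contra! hp2
    have := Nat.le_self_pow (Nat.sub_ne_zero_of_lt hX2) 6
    have := Nat.pow_le_pow_left hp2 2
    omega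
  have h2 : (2 : ZMod p) ≠ 0 := by
    exact_mod_cast (CharP.cast_eq_zero_iff (ZMod p) p 2).not.2
      (Nat.not_dvd_of_pos_of_lt two_pos hp2)
  exact hasUniqueDiff_self h2 (card_pos.1 (hS ▸ hX)) (hS ▸ hbound)
end

section
/- For every 3-element subset S of ℤ/pℤ with p ≥ 5 prime, there exists k ∈ ℤ/pℤ such that exactly one ordered pair (i, j) ∈ S × S satisfies i − j = k. -/
/-!
Write `r(k)` for the number of ordered pairs of `S = {a, b, c}` with difference `k`.
Without 2-torsion, `r(a - b) = 1` unless `a` or `b` is the midpoint of the other two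
elements (`2a = b + c` or `2b = a + c`). Without 3-torsion at most one element of `S` is
such a midpoint, so some ordered pair of the other two has a uniquely represented difference.
-/

section

variable {G : Type*} [AddCommGroup G]

theorem card_filter_sub_eq_sub_eq_one [DecidableEq G] (h2 : ∀ x : G, 2 • x = 0 → x = 0)
    {a b c : G} (hab : a ≠ b) (hac : a ≠ c) (hbc : b ≠ c)
    (ha : 2 • a ≠ b + c) (hb : 2 • b ≠ a + c) :
    ((({a, b, c} : Finset G) ×ˢ {a, b, c}).filter (fun ij => ij.1 - ij.2 = a - b)).card = 1 := by
  rw [Finset.card_eq_one]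
  refine ⟨(a, b), Finset.eq_singleton_iff_unique_mem.mpr ⟨by simp, ?_⟩⟩
  rintro ⟨i, j⟩ hij
  simp only [Finset.mem_filter, Finset.mem_product, Finset.mem_insert,
    Finset.mem_singleton] at hij
  obtain ⟨⟨hi | hi | hi, hj | hj | hj⟩, hk⟩ := hij <;> subst hi hj
  all_goals first
    | rfl
    | exact absurd (by linear_combination (norm := module) -hk) hab
    | exact absurd (by linear_combination (norm := module) hk) hbc
    | exact absurd (by linear_combination (norm := module) -hk) hac
    | exact absurd (by linear_combination (norm := module) hk) hb
    | exact absurd (by linear_combination (norm := module) -hk) ha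
    | exact absurd (h2 _ (by linear_combination (norm := module) -hk)) (sub_ne_zero.mpr hab)

theorem two_nsmul_ne_add_of_two_nsmul_eq_add (h3 : ∀ x : G, 3 • x = 0 → x = 0)
    {a b c : G} (hab : a ≠ b) (ha : 2 • a = b + c) :
    2 • b ≠ a + c := fun hb =>
  sub_ne_zero.mpr hab (h3 _ (by linear_combination (norm := module) ha - hb))

theorem exists_card_filter_sub_eq_one [DecidableEq G] (h2 : ∀ x : G, 2 • x = 0 → x = 0)
    (h3 : ∀ x : G, 3 • x = 0 → x = 0) {S : Finset G} (hS : S.card = 3) :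
    ∃ k : G, ((S ×ˢ S).filter (fun ij => ij.1 - ij.2 = k)).card = 1 := by
  obtain ⟨a, b, c, hab, hac, hbc, rfl⟩ := Finset.card_eq_three.mp hS
  by_cases ha : 2 • a = b + c
  · refine ⟨b - c, ?_⟩
    rw [Finset.insert_comm, Finset.pair_comm]
    refine card_filter_sub_eq_sub_eq_one h2 hbc hab.symm hac.symm ?_ ?_
    · exact add_comm a c ▸ two_nsmul_ne_add_of_two_nsmul_eq_add h3 hab ha
    · exact add_comm a b ▸ two_nsmul_ne_add_of_two_nsmul_eq_add h3 hac (add_comm b c ▸ ha)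
  by_cases hb : 2 • b = a + c
  · refine ⟨a - c, ?_⟩
    rw [Finset.pair_comm]
    refine card_filter_sub_eq_sub_eq_one h2 hac hab hbc.symm (add_comm b c ▸ ha) ?_
    exact add_comm b a ▸ two_nsmul_ne_add_of_two_nsmul_eq_add h3 hbc (add_comm a c ▸ hb)
  exact ⟨a - b, card_filter_sub_eq_sub_eq_one h2 hab hac hbc ha hb⟩

end

theorem ZMod.eq_zero_of_nsmul_eq_zero {p : ℕ} [Fact p.Prime] {n : ℕ} (hn : ¬p ∣ n)
    {x : ZMod p} (h : n • x = 0) : x = 0 := by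
  rw [nsmul_eq_mul, mul_eq_zero, ZMod.natCast_eq_zero_iff] at h
  exact h.resolve_left hn

/-- For every 3-element subset `S` of `ℤ/pℤ` with `p ≥ 5` prime, there exists `k` such that
exactly one ordered pair `(i, j) ∈ S × S` satisfies `i − j = k`. -/
theorem exists_unique_difference_card_three (p : ℕ) (hp : p.Prime) (hp5 : 5 ≤ p)
    (S : Finset (ZMod p)) (hS : S.card = 3) :
    ∃ k : ZMod p, ((S ×ˢ S).filter (fun ij => ij.1 - ij.2 = k)).card = 1 := by
  have : Fact p.Prime := ⟨hp⟩
  have not_dvd {n : ℕ} (hn : 0 < n) (hnp : n < p) : ¬p ∣ n :=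
    fun h => (Nat.le_of_dvd hn h).not_gt hnp
  exact exists_card_filter_sub_eq_one
    (fun _ => ZMod.eq_zero_of_nsmul_eq_zero (not_dvd two_pos (by omega)))
    (fun _ => ZMod.eq_zero_of_nsmul_eq_zero (not_dvd three_pos (by omega))) hS
end

section
/- Suppose ζ, β₁, β₂ are roots of unity in ℂ satisfying β₁(1 + ζ) + β₁^{-1}β₂(ζ^{-1} − ζ) + β₂^{-1}(1 − ζ^{-1}) = 0. Then ζ has order 4 or 8. -/
/-!
Multiplied by `β₁ β₂ ζ`, the relation becomes a polynomial identity with rational coefficients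
between roots of unity, so it survives every Galois conjugation `x ↦ x ^ k` with `k` prime to a
common order. Conjugating by `k ≡ -1` and substituting shows that `(-ζ, β₂, β₁)` is a solution too.

The three terms of the cleared relation have absolute values `|1 + ζ|`, `|1 + ζ| |1 - ζ|` and
`|1 - ζ|`, and the triangle inequality then forces `|Re ζ| < 4/5`. Every primitive root of the same
order as `ζ` is a conjugate of `ζ`, which rules out order at least `10`; through `-ζ`, of order
`2n` when `ζ` has odd order `n`, it also rules out odd orders other than `1` and `3`. Finally, if
`ζ ^ 6 = 1` then `ζ` or `-ζ` is a primitive cube root of unity, and the relation produces a root of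
unity `u` with `Re u = -5/6`, impossible since `2 Re u = u + u⁻¹` is an algebraic integer.
-/

open Polynomial

theorem exists_coprime_modEq_of_dvd {n N i : ℕ} (hN : 0 < N) (hdvd : n ∣ N) (hi : i.Coprime n) :
    ∃ k : ℕ, k.Coprime N ∧ k ≡ i [MOD n] := by
  have : NeZero N := ⟨hN.ne'⟩
  obtain ⟨v, hv⟩ := ZMod.unitsMap_surjective hdvd (ZMod.unitOfCoprime i hi)
  refine ⟨(v : ZMod N).val, ZMod.val_coe_unit_coprime v, ?_⟩
  rw [← ZMod.natCast_eq_natCast_iff, ZMod.natCast_val, ← ZMod.coe_unitOfCoprime i hi, ← hv,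
    ZMod.unitsMap_val]

theorem aeval_pow_eq_zero_of_coprime {K : Type*} [Field K] [CharZero K] {ω : K} {N k : ℕ}
    (hN : 0 < N) (hω : IsPrimitiveRoot ω N) (hk : k.Coprime N) {p : ℚ[X]}
    (hp : aeval ω p = 0) : aeval (ω ^ k) p = 0 := by
  rw [← minpoly.dvd_iff, ← cyclotomic_eq_minpoly_rat (hω.pow_of_coprime k hk) hN,
    cyclotomic_eq_minpoly_rat hω hN, minpoly.dvd_iff]
  exact hp

theorem isIntegral_add_inv_of_pow_eq_one {K : Type*} [Field K] {u : K} {M : ℕ} (hM : 0 < M)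
    (hu : u ^ M = 1) : IsIntegral ℤ (u + u⁻¹) :=
  (IsIntegral.of_pow hM (hu ▸ isIntegral_one)).add
    (IsIntegral.of_pow hM (by rw [inv_pow, hu, inv_one]; exact isIntegral_one))

theorem exists_int_eq_of_two_mul_re_eq {u : ℂ} {M : ℕ} (hM : 0 < M) (hu : u ^ M = 1) {q : ℚ}
    (hq : 2 * u.re = q) : ∃ k : ℤ, q = k := by
  have hre : u + u⁻¹ = q := by
    rw [Complex.inv_eq_conj (Complex.norm_eq_one_of_pow_eq_one hu hM.ne'), Complex.add_conj, hq]
    norm_cast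
  obtain ⟨k, hk⟩ :=
    (isIntegral_add_inv_of_pow_eq_one hM hu).exists_int_iff_exists_rat.mp ⟨q, hre⟩
  exact ⟨k, by exact_mod_cast hre.symm.trans hk⟩

theorem orderOf_neg_of_odd {R : Type*} [CommRing R] [CharZero R] {x : R}
    (hx : Odd (orderOf x)) : orderOf (-x) = 2 * orderOf x := by
  have h2 : orderOf (-1 : R) = 2 := by
    rw [orderOf_neg_one, ringChar.eq_zero, if_neg two_ne_zero.symm]
  rw [neg_eq_neg_one_mul, (Commute.all _ _).orderOf_mul_eq_mul_orderOf_of_coprime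
    (by rwa [h2, Nat.coprime_two_left]), h2]

theorem sq_norm_one_add_of_norm_eq_one {z : ℂ} (hz : ‖z‖ = 1) : ‖1 + z‖ ^ 2 = 2 + 2 * z.re := by
  have h := Complex.sq_norm z
  rw [hz, Complex.normSq_apply] at h
  rw [Complex.sq_norm, Complex.normSq_apply]
  simp only [Complex.add_re, Complex.add_im, Complex.one_re, Complex.one_im]
  nlinarith

theorem four_fifths_le_cos {θ : ℝ} (h0 : 0 ≤ θ) (h : θ ≤ Real.pi / 5) : 4 / 5 ≤ Real.cos θ := by
  have h1 : Real.cos (Real.pi / 5) ≤ Real.cos θ :=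
    Real.cos_le_cos_of_nonneg_of_le_pi h0 (by linarith [Real.pi_pos]) h
  rw [Real.cos_pi_div_five] at h1
  nlinarith [Real.sq_sqrt (by norm_num : (0:ℝ) ≤ 5), Real.sqrt_nonneg 5]

theorem sq_sub_sq_lt_of_le {a c : ℝ} (ha : 0 ≤ a) (hc : 0 ≤ c) (hac : a ^ 2 + c ^ 2 = 4)
    (h : a ≤ a * c + c) : a ^ 2 - c ^ 2 < 16 / 5 := by
  by_contra! hlt
  have : a ^ 2 ≤ (c * (a + 1)) ^ 2 := by nlinarith
  nlinarith [sq_nonneg (a + 1), sq_nonneg a]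

-- The relation of the theorem with denominators cleared, see `relation_eq_mul`.
def relation {R : Type*} [CommRing R] (ζ β₁ β₂ : R) : R :=
  β₁ ^ 2 * β₂ * (ζ + ζ ^ 2) + β₂ ^ 2 * (1 - ζ ^ 2) + β₁ * (ζ - 1)

theorem map_relation {R S F : Type*} [CommRing R] [CommRing S] [FunLike F R S]
    [RingHomClass F R S] (φ : F) (ζ β₁ β₂ : R) :
    φ (relation ζ β₁ β₂) = relation (φ ζ) (φ β₁) (φ β₂) := by
  simp [relation]

theorem relation_eq_mul {K : Type*} [Field K] {ζ β₁ β₂ : K} (hζ : ζ ≠ 0) (hβ₁ : β₁ ≠ 0)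
    (hβ₂ : β₂ ≠ 0) : relation ζ β₁ β₂ =
      β₁ * β₂ * ζ * (β₁ * (1 + ζ) + β₁⁻¹ * β₂ * (ζ⁻¹ - ζ) + β₂⁻¹ * (1 - ζ⁻¹)) := by
  unfold relation
  field_simp

theorem relation_neg_eq {K : Type*} [Field K] {ζ β₁ β₂ : K} (hζ : ζ ≠ 0) (hβ₁ : β₁ ≠ 0)
    (hβ₂ : β₂ ≠ 0) : relation (-ζ) β₂ β₁ = -(β₁ * β₂ * ζ) ^ 2 * relation ζ⁻¹ β₁⁻¹ β₂⁻¹ := by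
  unfold relation
  field_simp
  ring

theorem relation_pow_eq_zero {ζ β₁ β₂ : ℂ} {N k : ℕ} (hN : 0 < N) (hζ : ζ ^ N = 1)
    (hβ₁ : β₁ ^ N = 1) (hβ₂ : β₂ ^ N = 1) (hk : k.Coprime N) (h : relation ζ β₁ β₂ = 0) :
    relation (ζ ^ k) (β₁ ^ k) (β₂ ^ k) = 0 := by
  have hω := Complex.isPrimitiveRoot_exp N hN.ne'
  have : NeZero N := ⟨hN.ne'⟩
  obtain ⟨a, -, rfl⟩ := hω.eq_pow_of_pow_eq_one hζ
  obtain ⟨b, -, rfl⟩ := hω.eq_pow_of_pow_eq_one hβ₁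
  obtain ⟨c, -, rfl⟩ := hω.eq_pow_of_pow_eq_one hβ₂
  have key := aeval_pow_eq_zero_of_coprime (p := relation (X ^ a) (X ^ b) (X ^ c)) hN hω hk
    (by simpa [map_relation] using h)
  simpa [map_relation, ← pow_mul, mul_comm k] using key

structure IsSolution (ζ β₁ β₂ : ℂ) : Prop where
  exists_pow_eq_one : ∃ N, 0 < N ∧ ζ ^ N = 1 ∧ β₁ ^ N = 1 ∧ β₂ ^ N = 1
  relation_eq_zero : relation ζ β₁ β₂ = 0

namespace IsSolution

variable {ζ β₁ β₂ : ℂ}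

theorem norm_eq_one (h : IsSolution ζ β₁ β₂) : ‖ζ‖ = 1 ∧ ‖β₁‖ = 1 ∧ ‖β₂‖ = 1 := by
  obtain ⟨N, hN, hζ, hβ₁, hβ₂⟩ := h.exists_pow_eq_one
  exact ⟨Complex.norm_eq_one_of_pow_eq_one hζ hN.ne', Complex.norm_eq_one_of_pow_eq_one hβ₁ hN.ne',
    Complex.norm_eq_one_of_pow_eq_one hβ₂ hN.ne'⟩

theorem ne_zero (h : IsSolution ζ β₁ β₂) : ζ ≠ 0 ∧ β₁ ≠ 0 ∧ β₂ ≠ 0 := by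
  obtain ⟨hζ, hβ₁, hβ₂⟩ := h.norm_eq_one
  exact ⟨norm_ne_zero_iff.mp (by simp [hζ]), norm_ne_zero_iff.mp (by simp [hβ₁]),
    norm_ne_zero_iff.mp (by simp [hβ₂])⟩

theorem inv (h : IsSolution ζ β₁ β₂) : IsSolution ζ⁻¹ β₁⁻¹ β₂⁻¹ := by
  obtain ⟨N, hN, hζ, hβ₁, hβ₂⟩ := h.exists_pow_eq_one
  have pow_pred : ∀ x : ℂ, x ^ N = 1 → x ^ (N - 1) = x⁻¹ := fun x hx =>
    eq_inv_of_mul_eq_one_left (by rw [← pow_succ, Nat.sub_add_cancel hN, hx])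
  refine ⟨⟨N, hN, by simp [hζ], by simp [hβ₁], by simp [hβ₂]⟩, ?_⟩
  have hk : (N - 1).Coprime N := (Nat.coprime_self_sub_left hN).mpr (Nat.coprime_one_left N)
  simpa only [pow_pred _ hζ, pow_pred _ hβ₁, pow_pred _ hβ₂] using
    relation_pow_eq_zero hN hζ hβ₁ hβ₂ hk h.relation_eq_zero

theorem neg_swap (h : IsSolution ζ β₁ β₂) : IsSolution (-ζ) β₂ β₁ := by
  obtain ⟨N, hN, hζ, hβ₁, hβ₂⟩ := h.exists_pow_eq_one
  obtain ⟨hζ0, hβ₁0, hβ₂0⟩ := h.ne_zero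
  refine ⟨⟨2 * N, by positivity, ?_, ?_, ?_⟩, ?_⟩
  · rw [Even.neg_pow (even_two_mul N), pow_mul', hζ, one_pow]
  · rw [pow_mul', hβ₂, one_pow]
  · rw [pow_mul', hβ₁, one_pow]
  · rw [relation_neg_eq hζ0 hβ₁0 hβ₂0, h.inv.relation_eq_zero, mul_zero]

theorem abs_re_lt (h : IsSolution ζ β₁ β₂) : |ζ.re| < 4 / 5 := by
  obtain ⟨hζ, hβ₁, hβ₂⟩ := h.norm_eq_one
  have ha : ‖1 + ζ‖ ^ 2 = 2 + 2 * ζ.re := sq_norm_one_add_of_norm_eq_one hζ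
  have hc : ‖1 - ζ‖ ^ 2 = 2 - 2 * ζ.re := by
    simpa [sub_eq_add_neg] using sq_norm_one_add_of_norm_eq_one (z := -ζ) (by simpa using hζ)
  set x := β₁ ^ 2 * β₂ * ζ * (1 + ζ)
  set y := β₂ ^ 2 * ((1 + ζ) * (1 - ζ))
  set z := β₁ * (1 - ζ)
  have hxyz : x + y = z := by
    have hrel := h.relation_eq_zero
    unfold relation at hrel
    linear_combination hrel
  have hx : ‖x‖ = ‖1 + ζ‖ := by simp [x, hβ₁, hβ₂, hζ]
  have hy : ‖y‖ = ‖1 + ζ‖ * ‖1 - ζ‖ := by simp [y, hβ₂]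
  have hz : ‖z‖ = ‖1 - ζ‖ := by simp [z, hβ₁]
  have h₁ : ‖1 + ζ‖ ≤ ‖1 + ζ‖ * ‖1 - ζ‖ + ‖1 - ζ‖ := by
    have := norm_sub_le z y
    rw [hz, hy, ← hxyz, add_sub_cancel_right, hx] at this
    linarith
  have h₂ : ‖1 - ζ‖ ≤ ‖1 - ζ‖ * ‖1 + ζ‖ + ‖1 + ζ‖ := by
    have := norm_add_le x y
    rw [hxyz, hx, hy, hz] at this
    linarith
  have hsum : ‖1 + ζ‖ ^ 2 + ‖1 - ζ‖ ^ 2 = 4 := by linarith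
  have := sq_sub_sq_lt_of_le (norm_nonneg _) (norm_nonneg _) hsum h₁
  have := sq_sub_sq_lt_of_le (norm_nonneg _) (norm_nonneg _) (by linarith) h₂
  rw [abs_lt]
  constructor <;> linarith

theorem exists_of_isPrimitiveRoot (h : IsSolution ζ β₁ β₂) {ξ : ℂ}
    (hξ : IsPrimitiveRoot ξ (orderOf ζ)) : ∃ β₁' β₂', IsSolution ξ β₁' β₂' := by
  obtain ⟨N, hN, hζ, hβ₁, hβ₂⟩ := h.exists_pow_eq_one
  have hfin : IsOfFinOrder ζ := isOfFinOrder_iff_pow_eq_one.mpr ⟨N, hN, hζ⟩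
  have : NeZero (orderOf ζ) := ⟨hfin.orderOf_pos.ne'⟩
  have hprim := IsPrimitiveRoot.orderOf ζ
  obtain ⟨i, -, rfl⟩ := hprim.eq_pow_of_pow_eq_one hξ.pow_eq_one
  obtain ⟨k, hk, hki⟩ := exists_coprime_modEq_of_dvd hN (orderOf_dvd_of_pow_eq_one hζ)
    ((hprim.pow_iff_coprime hfin.orderOf_pos i).mp hξ)
  rw [← hfin.pow_eq_pow_iff_modEq.mpr hki]
  exact ⟨β₁ ^ k, β₂ ^ k, ⟨N, hN, by rw [pow_right_comm, hζ, one_pow],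
    by rw [pow_right_comm, hβ₁, one_pow], by rw [pow_right_comm, hβ₂, one_pow]⟩,
    relation_pow_eq_zero hN hζ hβ₁ hβ₂ hk h.relation_eq_zero⟩

theorem orderOf_lt_ten (h : IsSolution ζ β₁ β₂) : orderOf ζ < 10 := by
  by_contra! hn
  set n := orderOf ζ
  obtain ⟨β₁', β₂', hξ⟩ :=
    h.exists_of_isPrimitiveRoot (Complex.isPrimitiveRoot_exp n (by omega))
  have hre : (Complex.exp (2 * Real.pi * Complex.I / n)).re = Real.cos (2 * Real.pi / n) := by
    rw [← Complex.exp_ofReal_mul_I_re]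
    push_cast
    ring_nf
  have hcos : 4 / 5 ≤ Real.cos (2 * Real.pi / n) := by
    have : (10 : ℝ) ≤ n := by exact_mod_cast hn
    apply four_fifths_le_cos (by positivity)
    rw [div_le_div_iff₀ (by positivity) (by norm_num)]
    nlinarith [Real.pi_pos]
  have := hξ.abs_re_lt
  rw [hre, abs_of_nonneg (by linarith)] at this
  linarith

theorem sq_norm_one_add_eq_of_cyclotomic_three (h : IsSolution ζ β₁ β₂)
    (hΦ : ζ ^ 2 + ζ + 1 = 0) : ‖1 + β₂ ^ 2 * ζ ^ 2 / β₁‖ ^ 2 = 1 / 3 := by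
  obtain ⟨hζ, hβ₁, hβ₂⟩ := h.norm_eq_one
  -- with `1 + ζ = -ζ ^ 2` the relation becomes `(1 - ζ) * (β₁ + β₂ ^ 2 * ζ ^ 2) = -β₁ ^ 2 * β₂`
  have hkey : (1 - ζ) * (β₁ * (1 + β₂ ^ 2 * ζ ^ 2 / β₁)) = -(β₁ ^ 2 * β₂) := by
    have hrel := h.relation_eq_zero
    unfold relation at hrel
    rw [mul_one_add, mul_div_cancel₀ _ h.ne_zero.2.1]
    linear_combination -hrel + (β₁ ^ 2 * β₂ - β₂ ^ 2 * (ζ - 1)) * hΦ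
  have h1ζ : ‖1 - ζ‖ ^ 2 = 3 := by
    rw [← norm_pow, show (1 - ζ) ^ 2 = -3 * ζ by linear_combination hΦ]
    simp [hζ]
  have := congrArg (‖·‖ ^ 2) hkey
  simp only [norm_mul, norm_neg, norm_pow, hβ₁, hβ₂, mul_pow, h1ζ] at this
  linarith

theorem pow_three_ne_one (h : IsSolution ζ β₁ β₂) : ζ ^ 3 ≠ 1 := by
  intro h3
  have hζ1 : ζ ≠ 1 := by
    rintro rfl
    have := h.abs_re_lt
    norm_num at this
  have hΦ : ζ ^ 2 + ζ + 1 = 0 := by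
    have : (ζ - 1) * (ζ ^ 2 + ζ + 1) = 0 := by linear_combination h3
    exact (mul_eq_zero.mp this).resolve_left (sub_ne_zero.mpr hζ1)
  obtain ⟨N, hN, hζN, hβ₁N, hβ₂N⟩ := h.exists_pow_eq_one
  obtain ⟨hζ, hβ₁, hβ₂⟩ := h.norm_eq_one
  set u := β₂ ^ 2 * ζ ^ 2 / β₁
  have hu : ‖u‖ = 1 := by simp [u, hβ₁, hβ₂, hζ]
  have huN : u ^ N = 1 := by
    simp only [u, div_pow, ← pow_mul, mul_pow]
    rw [pow_mul', hβ₂N, pow_mul', hζN, hβ₁N]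
    simp
  have hre := h.sq_norm_one_add_eq_of_cyclotomic_three hΦ
  rw [sq_norm_one_add_of_norm_eq_one hu] at hre
  obtain ⟨k, hk⟩ := exists_int_eq_of_two_mul_re_eq hN huN (q := -5 / 3) (by push_cast; linarith)
  have : (3 * k : ℚ) = -5 := by rw [← hk]; norm_num
  have : 3 * k = -5 := by exact_mod_cast this
  omega

theorem pow_six_ne_one (h : IsSolution ζ β₁ β₂) : ζ ^ 6 ≠ 1 := by
  intro h6
  have : (ζ ^ 3 - 1) * ((-ζ) ^ 3 - 1) = 0 := by linear_combination -h6
  rcases mul_eq_zero.mp this with h3 | h3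
  · exact h.pow_three_ne_one (sub_eq_zero.mp h3)
  · exact h.neg_swap.pow_three_ne_one (sub_eq_zero.mp h3)

theorem even_orderOf (h : IsSolution ζ β₁ β₂) : Even (orderOf ζ) := by
  by_contra hodd
  rw [Nat.not_even_iff_odd] at hodd
  have h10 := h.neg_swap.orderOf_lt_ten
  rw [orderOf_neg_of_odd hodd] at h10
  have : orderOf ζ = 1 ∨ orderOf ζ = 3 := by
    obtain ⟨m, hm⟩ := hodd
    omega
  apply h.pow_six_ne_one
  rw [← orderOf_dvd_iff_pow_eq_one]
  rcases this with h' | h' <;> rw [h'] <;> norm_num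

end IsSolution

/-- If `ζ, β₁, β₂` are roots of unity satisfying
`β₁(1 + ζ) + β₁⁻¹β₂(ζ⁻¹ − ζ) + β₂⁻¹(1 − ζ⁻¹) = 0`, then `ζ` has order 4 or 8. -/
theorem order_four_or_eight_of_relation
    (ζ β₁ β₂ : ℂ)
    (hζ : ∃ n : ℕ, 0 < n ∧ ζ ^ n = 1)
    (hβ₁ : ∃ n : ℕ, 0 < n ∧ β₁ ^ n = 1)
    (hβ₂ : ∃ n : ℕ, 0 < n ∧ β₂ ^ n = 1)
    (heq : β₁ * (1 + ζ) + β₁⁻¹ * β₂ * (ζ⁻¹ - ζ) + β₂⁻¹ * (1 - ζ⁻¹) = 0) :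
    orderOf ζ = 4 ∨ orderOf ζ = 8 := by
  obtain ⟨n₁, hn₁, hζn⟩ := hζ
  obtain ⟨n₂, hn₂, hβ₁n⟩ := hβ₁
  obtain ⟨n₃, hn₃, hβ₂n⟩ := hβ₂
  have hsol : IsSolution ζ β₁ β₂ := by
    refine ⟨⟨n₁ * n₂ * n₃, by positivity, ?_, ?_, ?_⟩, ?_⟩
    · rw [mul_assoc, pow_mul, hζn, one_pow]
    · rw [mul_comm n₁, mul_assoc, pow_mul, hβ₁n, one_pow]
    · rw [mul_comm, pow_mul, hβ₂n, one_pow]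
    · rw [relation_eq_mul (ne_zero_pow hn₁.ne' (by simp [hζn]))
        (ne_zero_pow hn₂.ne' (by simp [hβ₁n])) (ne_zero_pow hn₃.ne' (by simp [hβ₂n])), heq,
        mul_zero]
  have hpos : 0 < orderOf ζ := (isOfFinOrder_iff_pow_eq_one.mpr ⟨n₁, hn₁, hζn⟩).orderOf_pos
  have h6 : ¬ orderOf ζ ∣ 6 := fun hd => hsol.pow_six_ne_one (orderOf_dvd_iff_pow_eq_one.mp hd)
  have h10 := hsol.orderOf_lt_ten
  obtain ⟨m, hm⟩ := hsol.even_orderOf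
  rw [hm] at hpos h6 h10 ⊢
  have hm5 : m < 5 := by omega
  interval_cases m <;> omega
end

section
/- Suppose β and γ are cyclotomic integers lying in ℚ(ζ_N) with house(β)², house(γ)² ≤ 5 + 1/25, and set k = φ(N). If |house(β)² − house(γ)²| < (10 + 2/25)^{−k}, then house(β)² = house(γ)². -/
open Polynomial Module

section NormBound

variable {K : Type*} [Field K] [NumberField K]

theorem one_le_prod_norm_embeddings {a : K} (ha : IsIntegral ℤ a) (ha0 : a ≠ 0) :
    1 ≤ ∏ σ : K →ₐ[ℚ] ℂ, ‖σ a‖ := by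
  let x : NumberField.RingOfIntegers K := ⟨a, ha⟩
  have hx0 : x ≠ 0 := fun h => ha0 (congrArg Subtype.val h)
  have hprod : ∏ σ : K →ₐ[ℚ] ℂ, ‖σ a‖ = |(Algebra.norm ℤ x : ℝ)| := by
    rw [← norm_prod, ← Algebra.norm_eq_prod_embeddings ℚ ℂ a,
      show Algebra.norm ℚ a = Algebra.norm ℤ x from (Algebra.coe_norm_int x).symm]
    simp
  rw [hprod]
  exact_mod_cast Int.one_le_abs (Algebra.norm_ne_zero_iff.mpr hx0)

theorem eq_zero_of_norm_lt_zpow_neg_finrank {a : K} (ha : IsIntegral ℤ a) {B : ℝ}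
    (hB1 : 1 ≤ B) (hB : ∀ σ : K →ₐ[ℚ] ℂ, ‖σ a‖ ≤ B) (σ₀ : K →ₐ[ℚ] ℂ)
    (hσ₀ : ‖σ₀ a‖ < B ^ (-(finrank ℚ K : ℤ))) : a = 0 := by
  classical
  by_contra ha0
  have hB0 : 0 < B := zero_lt_one.trans_le hB1
  have hrest : ∏ σ ∈ Finset.univ.erase σ₀, ‖σ a‖ ≤ B ^ finrank ℚ K := calc
    _ ≤ ∏ _σ ∈ Finset.univ.erase σ₀, B :=
      Finset.prod_le_prod (fun σ _ => norm_nonneg _) fun σ _ => hB σ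
    _ = B ^ (Finset.univ.erase σ₀).card := Finset.prod_const B
    _ ≤ B ^ Fintype.card (K →ₐ[ℚ] ℂ) := pow_le_pow_right₀ hB1 (Finset.card_erase_le)
    _ = B ^ finrank ℚ K := by rw [AlgHom.card]
  have := calc
    1 ≤ ∏ σ : K →ₐ[ℚ] ℂ, ‖σ a‖ := one_le_prod_norm_embeddings ha ha0
    _ = ‖σ₀ a‖ * ∏ σ ∈ Finset.univ.erase σ₀, ‖σ a‖ :=
      (Finset.mul_prod_erase _ _ (Finset.mem_univ σ₀)).symm
    _ ≤ ‖σ₀ a‖ * B ^ finrank ℚ K := by gcongr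
    _ < B ^ (-(finrank ℚ K : ℤ)) * B ^ finrank ℚ K := by gcongr
    _ = 1 := by rw [zpow_neg, zpow_natCast, inv_mul_cancel₀ (pow_pos hB0 _).ne']
  exact this.false

end NormBound

theorem aeval_conj_eq_zero {p : ℚ[X]} {z : ℂ} (hz : aeval z p = 0) :
    aeval (starRingEnd ℂ z) p = 0 := by
  rw [← (starRingEnd ℂ).toRatAlgHom_apply, aeval_algHom_apply, hz, map_zero]

theorem isIntegral_of_aeval_minpoly_eq_zero {L : Type*} [Field L] [CharZero L] {δ z : L}
    (hδ : IsIntegral ℤ δ) (hz : aeval z (minpoly ℚ δ) = 0) : IsIntegral ℤ z := by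
  rw [minpoly.isIntegrallyClosed_eq_field_fractions' ℚ hδ, aeval_map_algebraMap] at hz
  exact ⟨minpoly ℤ δ, minpoly.monic hδ, by rwa [← aeval_def]⟩

theorem IntermediateField.mem_of_aeval_minpoly_eq_zero {F L : Type*} [Field F] [Field L]
    [Algebra F L] (K : IntermediateField F L) [hK : Normal F K] {x z : L} (hx : x ∈ K)
    (hz : aeval z (minpoly F x) = 0) : z ∈ K := by
  let y : K := ⟨x, hx⟩
  have hmin : minpoly F x = minpoly F y := minpoly.algebraMap_eq (algebraMap K L).injective y
  have hroot : (((minpoly F y).map (algebraMap F K)).map (algebraMap K L)).IsRoot z := by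
    rwa [Polynomial.map_map, ← IsScalarTower.algebraMap_eq, IsRoot, eval_map_algebraMap, ← hmin]
  obtain ⟨u, rfl⟩ := (hK.splits y).mem_range_of_isRoot
    (map_ne_zero (minpoly.ne_zero (hK.isIntegral y))) hroot
  exact u.2

section Cyclotomic

variable (N : ℕ) [NeZero N]

instance : IsCyclotomicExtension {N} ℚ (cycloField N) := by
  have hζ := Complex.isPrimitiveRoot_exp N (NeZero.ne N)
  change IsCyclotomicExtension {N} ℚ (cycloField N).toSubalgebra
  rw [cycloField, IntermediateField.adjoin_simple_toSubalgebra_of_isAlgebraic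
    (hζ.isIntegral (NeZero.pos N)).tower_top.isAlgebraic]
  exact hζ.adjoin_isCyclotomicExtension ℚ

instance : NumberField (cycloField N) := IsCyclotomicExtension.numberField {N} ℚ _

instance : IsGalois ℚ (cycloField N) := IsCyclotomicExtension.isGalois {N} ℚ _

theorem finrank_cycloField_s19 : finrank ℚ (cycloField N) = N.totient :=
  IsCyclotomicExtension.Rat.finrank N _

end Cyclotomic

/-- The greatest element of this set is the house of `δ`. -/
def conjugateNorms (δ : ℂ) : Set ℝ :=
  {x : ℝ | ∃ z : ℂ, aeval z (minpoly ℚ δ) = 0 ∧ x = ‖z‖}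

section House

variable (K : IntermediateField ℚ ℂ) {δ : ℂ} {h : ℝ}

theorem norm_algHom_le_of_isGreatest (hh : IsGreatest (conjugateNorms δ) h) {u : K}
    (hu : aeval (u : ℂ) (minpoly ℚ δ) = 0) (σ : K →ₐ[ℚ] ℂ) : ‖σ u‖ ≤ h := by
  have hu' : aeval u (minpoly ℚ δ) = 0 := by
    apply (algebraMap K ℂ).injective
    rwa [← aeval_algebraMap_apply, map_zero]
  exact hh.2 ⟨σ u, by rw [aeval_algHom_apply, hu', map_zero], rfl⟩

/-- The witness is `z * conj z` for a conjugate `z` of `δ` of maximal modulus. -/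
theorem exists_isIntegral_coe_eq_sq_of_isGreatest [Normal ℚ K] (hδ : IsIntegral ℤ δ)
    (hδK : δ ∈ K) (hh : IsGreatest (conjugateNorms δ) h) :
    ∃ x : K, IsIntegral ℤ x ∧ (x : ℂ) = ((h ^ 2 : ℝ) : ℂ) ∧ ∀ σ : K →ₐ[ℚ] ℂ, ‖σ x‖ ≤ h ^ 2 := by
  obtain ⟨z, hz, rfl⟩ := hh.1
  have hz' := aeval_conj_eq_zero hz
  -- `[Normal ℚ K]` elaborates with `DivisionRing.toRatAlgebra`, which agrees with the
  -- intermediate-field algebra structure only after unfolding, so the instance is passed by hand.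
  have hmem {w : ℂ} (hw : aeval w (minpoly ℚ δ) = 0) : w ∈ K :=
    K.mem_of_aeval_minpoly_eq_zero (hK := ‹_›) hδK hw
  let u : K := ⟨z, hmem hz⟩
  let u' : K := ⟨starRingEnd ℂ z, hmem hz'⟩
  refine ⟨u * u', ?_, ?_, fun σ => ?_⟩
  · rw [← isIntegral_algebraMap_iff (algebraMap K ℂ).injective]
    exact (isIntegral_of_aeval_minpoly_eq_zero hδ hz).mul
      (isIntegral_of_aeval_minpoly_eq_zero hδ hz')
  · change z * starRingEnd ℂ z = _
    rw [Complex.mul_conj, Complex.normSq_eq_norm_sq]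
  · rw [map_mul, norm_mul, sq]
    exact mul_le_mul (norm_algHom_le_of_isGreatest K hh hz σ)
      (norm_algHom_le_of_isGreatest K hh hz' σ) (norm_nonneg _) (norm_nonneg z)

end House

/-- If `β, γ` are cyclotomic integers in `ℚ(ζ_N)` with `house(β)², house(γ)² ≤ 5 + 1/25`,
and `|house(β)² − house(γ)²| < (10 + 2/25)^{-φ(N)}`, then `house(β)² = house(γ)²`. -/
theorem house_sq_eq_of_close
    (N : ℕ) (hN : 0 < N) (β γ : ℂ)
    (hβint : IsIntegral ℤ β) (hγint : IsIntegral ℤ γ)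
    (hβ : β ∈ cycloField N) (hγ : γ ∈ cycloField N)
    (hb hc : ℝ)
    (hhb : IsGreatest {x : ℝ | ∃ z : ℂ,
      Polynomial.aeval z (minpoly ℚ β) = 0 ∧ x = ‖z‖} hb)
    (hhc : IsGreatest {x : ℝ | ∃ z : ℂ,
      Polynomial.aeval z (minpoly ℚ γ) = 0 ∧ x = ‖z‖} hc)
    (hb5 : hb ^ 2 ≤ 5 + 1 / 25) (hc5 : hc ^ 2 ≤ 5 + 1 / 25)
    (hclose : |hb ^ 2 - hc ^ 2| < (10 + 2 / 25 : ℝ) ^ (-(Nat.totient N : ℤ))) :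
    hb ^ 2 = hc ^ 2 := by
  have : NeZero N := ⟨hN.ne'⟩
  set K := cycloField N
  obtain ⟨x, hxint, hx, hxσ⟩ := exists_isIntegral_coe_eq_sq_of_isGreatest K hβint hβ hhb
  obtain ⟨y, hyint, hy, hyσ⟩ := exists_isIntegral_coe_eq_sq_of_isGreatest K hγint hγ hhc
  have hxy : ((x - y : K) : ℂ) = ((hb ^ 2 - hc ^ 2 : ℝ) : ℂ) := by
    push_cast [hx, hy]; rfl
  have hbound (σ : K →ₐ[ℚ] ℂ) : ‖σ (x - y)‖ ≤ 10 + 2 / 25 := calc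
    ‖σ (x - y)‖ ≤ ‖σ x‖ + ‖σ y‖ := by rw [map_sub]; exact norm_sub_le _ _
    _ ≤ hb ^ 2 + hc ^ 2 := add_le_add (hxσ σ) (hyσ σ)
    _ ≤ 10 + 2 / 25 := by linarith
  have hgap : ‖K.val (x - y)‖ < (10 + 2 / 25 : ℝ) ^ (-(finrank ℚ K : ℤ)) := by
    rwa [finrank_cycloField_s19, IntermediateField.coe_val, hxy, Complex.norm_real, Real.norm_eq_abs]
  have hxy0 : x - y = 0 :=
    eq_zero_of_norm_lt_zpow_neg_finrank (hxint.sub hyint) (by norm_num) hbound K.val hgap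
  rw [hxy0, ZeroMemClass.coe_zero, eq_comm, Complex.ofReal_eq_zero, sub_eq_zero] at hxy
  exact hxy
end
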